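/- arXiv:2205.02756 — 6 statements merged into one kernel-verified Lean document; each statement's English description precedes it below -/
import Mathlib

section
/- Let A be an n×n Hermitian matrix (n ≥ 3) all of whose off-diagonal entries are nonnegative real numbers. If λ₁ ≤ λ₂ ≤ ⋯ ≤ λₙ are the eigenvalues of A and a₁ ≤ a₂ ≤ ⋯ ≤ aₙ are its diagonal entries in increasing order, then λ₂ ≤ a₃. -/
open Matrix Complex Finset

lemma hermC (a b e : ℝ) : (!![0,a,b;a,0,e;b,e,0] : Matrix (Fin 3) (Fin 3) ℝ).IsHermitian := by
  rw [Matrix.IsHermitian]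
  ext p q
  fin_cases p <;> fin_cases q <;> simp [Matrix.conjTranspose_apply]

lemma twoNonpos (a b e : ℝ) (ha : 0 ≤ a) (hb : 0 ≤ b) (he : 0 ≤ e) :
    ∃ l₁ l₂ : Fin 3, l₁ ≠ l₂ ∧ (hermC a b e).eigenvalues l₁ ≤ 0 ∧
      (hermC a b e).eigenvalues l₂ ≤ 0 := by
  set hC := hermC a b e
  set η := hC.eigenvalues with hη
  have htr : η 0 + η 1 + η 2 = 0 := by
    have h1 : Matrix.trace (!![0,a,b;a,0,e;b,e,0] : Matrix (Fin 3) (Fin 3) ℝ)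
        = ∑ l, η l := by
      conv_lhs => rw [hC.spectral_theorem, Unitary.conjStarAlgAut_apply]
      rw [Matrix.trace_mul_cycle]
      rw [Matrix.mem_unitaryGroup_iff'.mp hC.eigenvectorUnitary.2, Matrix.one_mul,
        Matrix.trace_diagonal]
      simp
      rfl
    have h2 : Matrix.trace (!![0,a,b;a,0,e;b,e,0] : Matrix (Fin 3) (Fin 3) ℝ) = 0 := by
      simp [Matrix.trace, Fin.sum_univ_three]
    rw [h2, Fin.sum_univ_three] at h1
    linarith
  have hdet : η 0 * η 1 * η 2 = 2 * (a * b * e) := by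
    have h1 := hC.det_eq_prod_eigenvalues
    rw [Matrix.det_fin_three] at h1
    simp only [Fin.prod_univ_three] at h1
    simp at h1
    rw [← h1]
    ring
  by_contra hcon
  push_neg at hcon
  have key : ∀ l₁ l₂ : Fin 3, l₁ ≠ l₂ → η l₁ ≤ 0 → 0 < η l₂ := hcon
  have habe : 0 ≤ 2 * (a * b * e) := by positivity
  rcases le_or_gt (η 0) 0 with h0 | h0
  · have h1 := key 0 1 (by decide) h0
    have h2 := key 0 2 (by decide) h0
    have h0neg : η 0 < 0 := by linarith
    have := mul_neg_of_neg_of_pos h0neg (mul_pos h1 h2)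
    nlinarith [hdet, habe]
  · rcases le_or_gt (η 1) 0 with h1 | h1
    · have h0' := key 1 0 (by decide) h1
      have h2 := key 1 2 (by decide) h1
      have h1neg : η 1 < 0 := by linarith
      have := mul_neg_of_neg_of_pos h1neg (mul_pos h0' h2)
      nlinarith [hdet, habe]
    · rcases le_or_gt (η 2) 0 with h2 | h2
      · have h0' := key 2 0 (by decide) h2
        have h1' := key 2 1 (by decide) h2
        have h2neg : η 2 < 0 := by linarith
        have := mul_neg_of_neg_of_pos h2neg (mul_pos h0' h1')
        nlinarith [hdet, habe]
      · linarith

lemma quad_expand {n : ℕ} (M : Matrix (Fin n) (Fin n) ℂ) (i j k : Fin n) (y : Fin 3 → ℂ) :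
    star (y 0 • (Pi.single i 1 : Fin n → ℂ) + y 1 • (Pi.single j 1 : Fin n → ℂ) + y 2 • (Pi.single k 1 : Fin n → ℂ)) ⬝ᵥ
      M *ᵥ (y 0 • (Pi.single i 1 : Fin n → ℂ) + y 1 • (Pi.single j 1 : Fin n → ℂ) + y 2 • (Pi.single k 1 : Fin n → ℂ))
    = ∑ m, ∑ m', star (y m) * M (![i,j,k] m) (![i,j,k] m') * y m' := by
  simp only [star_add, star_smul, ← Pi.single_star, star_one, Matrix.mulVec_add,
    Matrix.mulVec_smul, Matrix.mulVec_single, mul_one, add_dotProduct,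
    smul_dotProduct, dotProduct_add, dotProduct_smul,
    single_dotProduct, Fin.sum_univ_three, smul_eq_mul]
  simp [Matrix.cons_val_zero, Matrix.cons_val_one]
  ring

lemma lowerBound {n : ℕ} {A : Matrix (Fin n) (Fin n) ℂ} (hA : A.IsHermitian) (c : ℝ)
    (l₀ : Fin n) (hμ : ∀ l, l ≠ l₀ → c < hA.eigenvalues l) (x : Fin n → ℂ) (hx : x ≠ 0)
    (horth : star (⇑(hA.eigenvectorBasis l₀)) ⬝ᵥ x = 0) :
    c * (star x ⬝ᵥ x).re < (star x ⬝ᵥ A.mulVec x).re := by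
  set U : Matrix (Fin n) (Fin n) ℂ := (hA.eigenvectorUnitary : Matrix (Fin n) (Fin n) ℂ) with hU
  have hUU : U * star U = 1 := Matrix.mem_unitaryGroup_iff.mp hA.eigenvectorUnitary.2
  have hsUU : star U * U = 1 := Matrix.mem_unitaryGroup_iff'.mp hA.eigenvectorUnitary.2
  set y : Fin n → ℂ := (star U) *ᵥ x with hy
  have hxy : x = U *ᵥ y := by
    rw [hy, Matrix.mulVec_mulVec, hUU, Matrix.one_mulVec]
  have key : ∀ w z : Fin n → ℂ, star (U *ᵥ w) ⬝ᵥ (U *ᵥ z) = star w ⬝ᵥ z := by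
    intro w z
    rw [Matrix.star_mulVec, Matrix.dotProduct_mulVec, Matrix.vecMul_vecMul]
    have : star U = Uᴴ := rfl
    rw [← this, hsUU, Matrix.vecMul_one]
  have hnorm : star x ⬝ᵥ x = star y ⬝ᵥ y := by
    conv_lhs => rw [hxy]
    rw [key]
  have hAx : A *ᵥ x = U *ᵥ ((Matrix.diagonal (RCLike.ofReal ∘ hA.eigenvalues)) *ᵥ y) := by
    conv_lhs => rw [hA.spectral_theorem, Unitary.conjStarAlgAut_apply]
    rw [hy, Matrix.mulVec_mulVec, Matrix.mulVec_mulVec, ← hU]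
  have hquad : star x ⬝ᵥ A.mulVec x = ∑ l, (hA.eigenvalues l : ℂ) * (star (y l) * y l) := by
    conv_lhs => rw [hAx, hxy]
    rw [key]
    simp [dotProduct, Matrix.mulVec_diagonal, Function.comp]
    exact Finset.sum_congr rfl fun l _ => by ring
  -- y l₀ = 0
  have hyl₀ : y l₀ = 0 := by
    rw [hy]
    have : (star U *ᵥ x) l₀ = star (⇑(hA.eigenvectorBasis l₀)) ⬝ᵥ x := by
      simp only [Matrix.mulVec, dotProduct]
      refine Finset.sum_congr rfl fun p _ => ?_
      simp [hU, Matrix.star_apply]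
    rw [this, horth]
  have hyne : y ≠ 0 := by
    intro h
    apply hx
    rw [hxy, h, Matrix.mulVec_zero]
  obtain ⟨l₁, hl₁⟩ : ∃ l, y l ≠ 0 := by
    by_contra h
    push_neg at h
    exact hyne (funext h)
  have hl₁0 : l₁ ≠ l₀ := fun h => hl₁ (h ▸ hyl₀)
  have hre : (star x ⬝ᵥ A.mulVec x).re = ∑ l, hA.eigenvalues l * Complex.normSq (y l) := by
    rw [hquad]
    simp [Complex.normSq_apply]
  have hrenorm : (star x ⬝ᵥ x).re = ∑ l, Complex.normSq (y l) := by
    rw [hnorm]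
    simp [dotProduct, Complex.normSq_apply]
  rw [hre, hrenorm, Finset.mul_sum]
  apply Finset.sum_lt_sum
  · intro l _
    rcases eq_or_ne l l₀ with h | h
    · simp [h, hyl₀]
    · exact mul_le_mul_of_nonneg_right (hμ l h).le (Complex.normSq_nonneg _)
  · exact ⟨l₁, Finset.mem_univ _,
      mul_lt_mul_of_pos_right (hμ l₁ hl₁0) (Complex.normSq_pos.mpr hl₁)⟩




lemma norm_expand {n : ℕ} (i j k : Fin n) (hij : i ≠ j) (hik : i ≠ k) (hjk : j ≠ k)
    (y : Fin 3 → ℂ) :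
    star (y 0 • (Pi.single i 1 : Fin n → ℂ) + y 1 • (Pi.single j 1 : Fin n → ℂ) + y 2 • (Pi.single k 1 : Fin n → ℂ)) ⬝ᵥ
      (y 0 • (Pi.single i 1 : Fin n → ℂ) + y 1 • (Pi.single j 1 : Fin n → ℂ) + y 2 • (Pi.single k 1 : Fin n → ℂ))
    = star (y 0) * y 0 + star (y 1) * y 1 + star (y 2) * y 2 := by
  have h := quad_expand (1 : Matrix (Fin n) (Fin n) ℂ) i j k y
  rw [Matrix.one_mulVec] at h
  rw [h]
  simp [Fin.sum_univ_three, Matrix.one_apply, hij, hik, hjk, hij.symm, hik.symm, hjk.symm]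

lemma upperBound {n : ℕ} (A : Matrix (Fin n) (Fin n) ℂ) (i j k : Fin n)
    (hij : i ≠ j) (hik : i ≠ k) (hjk : j ≠ k)
    (d₁ d₂ d₃ a b e c : ℝ)
    (hAii : A i i = (d₁:ℂ)) (hAjj : A j j = (d₂:ℂ)) (hAkk : A k k = (d₃:ℂ))
    (hAij : A i j = (a:ℂ)) (hAji : A j i = (a:ℂ)) (hAik : A i k = (b:ℂ)) (hAki : A k i = (b:ℂ))
    (hAjk : A j k = (e:ℂ)) (hAkj : A k j = (e:ℂ))
    (hd₁ : d₁ ≤ c) (hd₂ : d₂ ≤ c) (hd₃ : d₃ ≤ c)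
    (ha : 0 ≤ a) (hb : 0 ≤ b) (he : 0 ≤ e) :
    ∃ u₁ u₂ : Fin n → ℂ, ∀ s t : ℂ,
      (star (s•u₁+t•u₂) ⬝ᵥ (s•u₁+t•u₂)).re = Complex.normSq s + Complex.normSq t ∧
      (star (s•u₁+t•u₂) ⬝ᵥ A *ᵥ (s•u₁+t•u₂)).re ≤ c * (star (s•u₁+t•u₂) ⬝ᵥ (s•u₁+t•u₂)).re := by
  obtain ⟨l₁, l₂, hl12, hη₁, hη₂⟩ := twoNonpos a b e ha hb he
  set hC := hermC a b e with hhC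
  set η₁ := hC.eigenvalues l₁
  set η₂ := hC.eigenvalues l₂
  set w₁ : Fin 3 → ℝ := ⇑(hC.eigenvectorBasis l₁) with hw₁
  set w₂ : Fin 3 → ℝ := ⇑(hC.eigenvectorBasis l₂) with hw₂
  -- orthonormality
  have hon := hC.eigenvectorBasis.orthonormal
  have hip : ∀ u v : EuclideanSpace ℝ (Fin 3), inner ℝ u v = ∑ p, u p * v p := by
    intro u v
    rw [PiLp.inner_apply]
    simp [RCLike.inner_apply, conj_trivial]
    exact Finset.sum_congr rfl fun _ _ => mul_comm _ _
  have hw11 : ∑ p, w₁ p * w₁ p = 1 := by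
    have h := hon.1 l₁
    have h2 : (inner ℝ (hC.eigenvectorBasis l₁) (hC.eigenvectorBasis l₁) : ℝ) = 1 := by
      rw [real_inner_self_eq_norm_sq, h]; norm_num
    rw [hip] at h2; exact h2
  have hw22 : ∑ p, w₂ p * w₂ p = 1 := by
    have h := hon.1 l₂
    have h2 : (inner ℝ (hC.eigenvectorBasis l₂) (hC.eigenvectorBasis l₂) : ℝ) = 1 := by
      rw [real_inner_self_eq_norm_sq, h]; norm_num
    rw [hip] at h2; exact h2
  have hw12 : ∑ p, w₁ p * w₂ p = 0 := by
    have h : (inner ℝ (hC.eigenvectorBasis l₁) (hC.eigenvectorBasis l₂) : ℝ) = 0 := hon.2 hl12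
    rw [hip] at h; exact h
  -- eigen equations over ℝ
  have heig₁ : !![0,a,b;a,0,e;b,e,0] *ᵥ w₁ = η₁ • w₁ := hC.mulVec_eigenvectorBasis l₁
  have heig₂ : !![0,a,b;a,0,e;b,e,0] *ᵥ w₂ = η₂ • w₂ := hC.mulVec_eigenvectorBasis l₂
  -- complexification
  set w₁c : Fin 3 → ℂ := fun p => ((w₁ p : ℝ) : ℂ) with hw₁c
  set w₂c : Fin 3 → ℂ := fun p => ((w₂ p : ℝ) : ℂ) with hw₂c
  set C₀ : Matrix (Fin 3) (Fin 3) ℂ := !![0,(a:ℂ),b;a,0,e;b,e,0] with hC₀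
  have hE : ∀ (w : Fin 3 → ℝ) (η : ℝ), !![0,a,b;a,0,e;b,e,0] *ᵥ w = η • w →
      C₀ *ᵥ (fun p => ((w p : ℝ) : ℂ)) = (η : ℂ) • (fun p => ((w p : ℝ) : ℂ)) := by
    intro w η hw
    funext p
    have hp := congrFun hw p
    simp only [Pi.smul_apply, smul_eq_mul] at hp
    fin_cases p <;>
      simp [hC₀, Matrix.mulVec, dotProduct, Fin.sum_univ_three] at hp ⊢ <;>
      norm_cast
  have hE₁ := hE w₁ η₁ heig₁
  have hE₂ := hE w₂ η₂ heig₂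
  -- the embedded vectors
  refine ⟨w₁c 0 • (Pi.single i 1 : Fin n → ℂ) + w₁c 1 • (Pi.single j 1 : Fin n → ℂ) + w₁c 2 • (Pi.single k 1 : Fin n → ℂ),
          w₂c 0 • (Pi.single i 1 : Fin n → ℂ) + w₂c 1 • (Pi.single j 1 : Fin n → ℂ) + w₂c 2 • (Pi.single k 1 : Fin n → ℂ), ?_⟩
  intro s t
  set y : Fin 3 → ℂ := s • w₁c + t • w₂c with hy
  have hxy : s • (w₁c 0 • (Pi.single i 1 : Fin n → ℂ) + w₁c 1 • (Pi.single j 1 : Fin n → ℂ) + w₁c 2 • (Pi.single k 1 : Fin n → ℂ))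
      + t • (w₂c 0 • (Pi.single i 1 : Fin n → ℂ) + w₂c 1 • (Pi.single j 1 : Fin n → ℂ) + w₂c 2 • (Pi.single k 1 : Fin n → ℂ))
      = y 0 • (Pi.single i 1 : Fin n → ℂ) + y 1 • (Pi.single j 1 : Fin n → ℂ) + y 2 • (Pi.single k 1 : Fin n → ℂ) := by
    simp only [hy, Pi.add_apply, Pi.smul_apply, smul_eq_mul]
    module
  rw [hxy]
  -- dot products of complexified eigenvectors
  have hdot : ∀ (u v : Fin 3 → ℝ), (∑ p, u p * v p = 0) → (fun p => ((u p : ℝ) : ℂ)) ⬝ᵥ (fun p => ((v p : ℝ) : ℂ)) = 0 := by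
    intro u v huv
    simp only [dotProduct, ← Complex.ofReal_mul, ← Complex.ofReal_sum, huv,
      Complex.ofReal_zero]
  have hdot1 : ∀ (u v : Fin 3 → ℝ), (∑ p, u p * v p = 1) → (fun p => ((u p : ℝ) : ℂ)) ⬝ᵥ (fun p => ((v p : ℝ) : ℂ)) = 1 := by
    intro u v huv
    simp only [dotProduct, ← Complex.ofReal_mul, ← Complex.ofReal_sum, huv,
      Complex.ofReal_one]
  have hw21 : ∑ p, w₂ p * w₁ p = 0 := by
    rw [← hw12]; exact Finset.sum_congr rfl fun p _ => mul_comm _ _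
  -- star of complexified vectors
  have hstarw : ∀ (u : Fin 3 → ℝ), star (fun p => ((u p : ℝ) : ℂ)) = fun p => ((u p : ℝ) : ℂ) := by
    intro u; funext p; simp [Pi.star_apply]
  -- key quadratic identity for C₀
  have hQ : star y ⬝ᵥ C₀ *ᵥ y = ((Complex.normSq s * η₁ + Complex.normSq t * η₂ : ℝ) : ℂ) := by
    have h1 : C₀ *ᵥ y = (s * η₁) • w₁c + (t * η₂) • w₂c := by
      rw [hy, Matrix.mulVec_add, Matrix.mulVec_smul, Matrix.mulVec_smul, hw₁c, hw₂c, hE₁, hE₂]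
      module
    rw [h1, hy]
    have hsy : star (s • w₁c + t • w₂c) = star s • w₁c + star t • w₂c := by
      rw [star_add, star_smul, star_smul, hw₁c, hw₂c, hstarw w₁, hstarw w₂]
    rw [hsy]
    rw [add_dotProduct, smul_dotProduct, smul_dotProduct,
      dotProduct_add, dotProduct_add, dotProduct_smul,
      dotProduct_smul, dotProduct_smul, dotProduct_smul]
    rw [hw₁c, hw₂c, hdot1 w₁ w₁ hw11, hdot1 w₂ w₂ hw22, hdot w₁ w₂ hw12, hdot w₂ w₁ hw21]
    simp only [smul_eq_mul, mul_one, mul_zero, add_zero, zero_add]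
    simp only [Complex.ofReal_add, Complex.ofReal_mul, Complex.normSq_eq_conj_mul_self,
      Complex.star_def]
    ring
  have hQle : (star y ⬝ᵥ C₀ *ᵥ y).re ≤ 0 := by
    rw [hQ, Complex.ofReal_re]
    have := Complex.normSq_nonneg s
    have := Complex.normSq_nonneg t
    nlinarith
  -- norm identity
  have hyy : star y ⬝ᵥ y = ((Complex.normSq s + Complex.normSq t : ℝ) : ℂ) := by
    rw [hy]
    have hsy : star (s • w₁c + t • w₂c) = star s • w₁c + star t • w₂c := by
      rw [star_add, star_smul, star_smul, hw₁c, hw₂c, hstarw w₁, hstarw w₂]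
    rw [hsy, add_dotProduct, smul_dotProduct, smul_dotProduct,
      dotProduct_add, dotProduct_add, dotProduct_smul,
      dotProduct_smul, dotProduct_smul, dotProduct_smul,
      hw₁c, hw₂c, hdot1 w₁ w₁ hw11, hdot1 w₂ w₂ hw22, hdot w₁ w₂ hw12, hdot w₂ w₁ hw21]
    simp only [smul_eq_mul, mul_one, mul_zero, add_zero, zero_add]
    simp only [Complex.ofReal_add, Complex.normSq_eq_conj_mul_self, Complex.star_def]
  -- norm of x
  have hnx : star (y 0 • (Pi.single i 1 : Fin n → ℂ) + y 1 • (Pi.single j 1 : Fin n → ℂ) + y 2 • (Pi.single k 1 : Fin n → ℂ)) ⬝ᵥ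
      (y 0 • (Pi.single i 1 : Fin n → ℂ) + y 1 • (Pi.single j 1 : Fin n → ℂ) + y 2 • (Pi.single k 1 : Fin n → ℂ))
      = ((Complex.normSq s + Complex.normSq t : ℝ) : ℂ) := by
    rw [norm_expand i j k hij hik hjk y, ← hyy, hy]
    simp only [dotProduct, Pi.star_apply, Fin.sum_univ_three]
  constructor
  · rw [hnx, Complex.ofReal_re]
  -- quadratic form bound
  rw [quad_expand A i j k y, hnx, Complex.ofReal_re]
  have hsplit : ∑ m, ∑ m', star (y m) * A (![i,j,k] m) (![i,j,k] m') * y m'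
      = (d₁:ℂ) * (star (y 0) * y 0) + (d₂:ℂ) * (star (y 1) * y 1) + (d₃:ℂ) * (star (y 2) * y 2)
        + star y ⬝ᵥ C₀ *ᵥ y := by
    simp only [Fin.sum_univ_three, Matrix.cons_val_zero, Matrix.cons_val_one, Matrix.head_cons,
      Matrix.cons_val_two, Matrix.tail_cons, hAii, hAjj, hAkk, hAij, hAji, hAik, hAki, hAjk, hAkj]
    simp [hC₀, Matrix.mulVec, dotProduct, Fin.sum_univ_three]
    ring
  rw [hsplit]
  have hterm : ∀ (d : ℝ) (z : ℂ), ((d:ℂ) * (star z * z)).re = d * Complex.normSq z := by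
    intro d z
    simp [Complex.star_def, Complex.mul_re, Complex.conj_re, Complex.conj_im,
      Complex.normSq_apply]
  simp only [Complex.add_re, hterm]
  have h1 : d₁ * Complex.normSq (y 0) ≤ c * Complex.normSq (y 0) :=
    mul_le_mul_of_nonneg_right hd₁ (Complex.normSq_nonneg _)
  have h2 : d₂ * Complex.normSq (y 1) ≤ c * Complex.normSq (y 1) :=
    mul_le_mul_of_nonneg_right hd₂ (Complex.normSq_nonneg _)
  have h3 : d₃ * Complex.normSq (y 2) ≤ c * Complex.normSq (y 2) :=
    mul_le_mul_of_nonneg_right hd₃ (Complex.normSq_nonneg _)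
  have hnormy : Complex.normSq (y 0) + Complex.normSq (y 1) + Complex.normSq (y 2)
      = Complex.normSq s + Complex.normSq t := by
    have hyy2 : star (y 0) * y 0 + star (y 1) * y 1 + star (y 2) * y 2
        = ((Complex.normSq s + Complex.normSq t : ℝ) : ℂ) := by
      rw [← norm_expand i j k hij hik hjk y]; exact hnx
    have h := congrArg Complex.re hyy2
    simp only [Complex.add_re, Complex.ofReal_re, Complex.star_def, Complex.mul_re,
      Complex.conj_re, Complex.conj_im, Complex.normSq_apply] at h
    simp only [Complex.normSq_apply]
    linarith [h]
  have hc : c * (Complex.normSq (y 0) + Complex.normSq (y 1) + Complex.normSq (y 2))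
      = c * (Complex.normSq s + Complex.normSq t) := by rw [hnormy]
  have hexp : c * (Complex.normSq (y 0) + Complex.normSq (y 1) + Complex.normSq (y 2))
      = c * Complex.normSq (y 0) + c * Complex.normSq (y 1) + c * Complex.normSq (y 2) := by ring
  linarith [hQle, h1, h2, h3]



lemma pick (α β : ℂ) : ∃ s t : ℂ, s * α + t * β = 0 ∧
    0 < Complex.normSq s + Complex.normSq t := by
  by_cases hab : α = 0 ∧ β = 0
  · exact ⟨1, 0, by rw [hab.1, hab.2]; ring, by simp⟩
  · refine ⟨β, -α, by ring, ?_⟩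
    rcases not_and_or.mp hab with h | h
    · have := Complex.normSq_pos.mpr h
      have := Complex.normSq_nonneg β
      simp only [Complex.normSq_neg]
      linarith
    · have := Complex.normSq_pos.mpr h
      have := Complex.normSq_nonneg (-α)
      linarith

/-- Eigenvalues of a Hermitian matrix, sorted in increasing order. -/
noncomputable def sortedEigs {n : ℕ} {A : Matrix (Fin n) (Fin n) ℂ}
    (hA : A.IsHermitian) : Fin n → ℝ :=
  hA.eigenvalues ∘ Tuple.sort hA.eigenvalues

/-- Diagonal entries (real parts) of a matrix, sorted in increasing order. -/
noncomputable def sortedDiag {n : ℕ} (A : Matrix (Fin n) (Fin n) ℂ) : Fin n → ℝ :=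
  (fun i => (A i i).re) ∘ Tuple.sort (fun i => (A i i).re)

theorem stmt4 (n : ℕ) (hn : 3 ≤ n) (A : Matrix (Fin n) (Fin n) ℂ)
    (hA : A.IsHermitian)
    (hoff : ∀ i j, i ≠ j → ∃ t : ℝ, 0 ≤ t ∧ A i j = (t : ℂ)) :
    sortedEigs hA ⟨1, by omega⟩ ≤ sortedDiag A ⟨2, by omega⟩ := by
  by_contra hcon
  push_neg at hcon
  set c := sortedDiag A ⟨2, by omega⟩ with hc
  set σ := Tuple.sort hA.eigenvalues with hσ
  set l₀ := σ ⟨0, by omega⟩ with hl₀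
  have hgt : ∀ l, l ≠ l₀ → c < hA.eigenvalues l := by
    intro l hl
    have hmono := Tuple.monotone_sort hA.eigenvalues
    have h1 : (⟨1, by omega⟩ : Fin n) ≤ σ.symm l := by
      have hne : σ.symm l ≠ ⟨0, by omega⟩ := by
        intro h
        apply hl
        rw [hl₀, ← h, Equiv.apply_symm_apply]
      have h0 : (σ.symm l).val ≠ 0 := fun h' => hne (Fin.ext h')
      rw [Fin.le_def]
      exact Nat.one_le_iff_ne_zero.mpr h0
    have h2 := hmono h1
    have h3 : hA.eigenvalues l = (hA.eigenvalues ∘ σ) (σ.symm l) := by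
      simp [Function.comp, Equiv.apply_symm_apply]
    rw [h3]
    exact lt_of_lt_of_le hcon h2
  set τ := Tuple.sort (fun p : Fin n => (A p p).re) with hτ
  set i := τ ⟨0, by omega⟩ with hi
  set j := τ ⟨1, by omega⟩ with hj
  set k := τ ⟨2, by omega⟩ with hk
  have hij : i ≠ j := fun h => absurd (τ.injective h) (by simp [Fin.ext_iff])
  have hik : i ≠ k := fun h => absurd (τ.injective h) (by simp [Fin.ext_iff])
  have hjk : j ≠ k := fun h => absurd (τ.injective h) (by simp [Fin.ext_iff])
  have hdmono := Tuple.monotone_sort (fun p : Fin n => (A p p).re)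
  have hck : c = (A k k).re := rfl
  have hd₁ : (A i i).re ≤ c := by
    rw [hck]
    exact hdmono (Fin.mk_le_mk.mpr (by omega))
  have hd₂ : (A j j).re ≤ c := by
    rw [hck]
    exact hdmono (Fin.mk_le_mk.mpr (by omega))
  have hd₃ : (A k k).re ≤ c := le_of_eq hck.symm
  have hdiagval : ∀ p : Fin n, A p p = (((A p p).re : ℝ) : ℂ) := by
    intro p
    have h := hA.apply p p
    exact (Complex.conj_eq_iff_re.mp h).symm
  obtain ⟨a, ha, hija⟩ := hoff i j hij
  obtain ⟨b, hb, hikb⟩ := hoff i k hik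
  obtain ⟨e, he, hjke⟩ := hoff j k hjk
  have hsym : ∀ (p q : Fin n) (r : ℝ), A p q = (r:ℂ) → A q p = (r:ℂ) := by
    intro p q r hpq
    have h := hA.apply p q
    rw [hpq] at h
    rw [← star_star (A q p), h]
    simp
  obtain ⟨u₁, u₂, hu⟩ := upperBound A i j k hij hik hjk (A i i).re (A j j).re (A k k).re a b e c
    (hdiagval i) (hdiagval j) (hdiagval k) hija (hsym i j a hija) hikb (hsym i k b hikb)
    hjke (hsym j k e hjke) hd₁ hd₂ hd₃ ha hb he
  obtain ⟨s, t, hst0, hstpos⟩ := pick (star (⇑(hA.eigenvectorBasis l₀)) ⬝ᵥ u₁)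
    (star (⇑(hA.eigenvectorBasis l₀)) ⬝ᵥ u₂)
  obtain ⟨hnorm, hquadle⟩ := hu s t
  have horth : star (⇑(hA.eigenvectorBasis l₀)) ⬝ᵥ (s • u₁ + t • u₂) = 0 := by
    rw [dotProduct_add, dotProduct_smul, dotProduct_smul]
    simpa using hst0
  have hxne : s • u₁ + t • u₂ ≠ 0 := by
    intro h
    rw [h] at hnorm
    simp only [star_zero, dotProduct_zero, Complex.zero_re] at hnorm
    linarith
  have hlow := lowerBound hA c l₀ hgt (s • u₁ + t • u₂) hxne horth
  rw [hnorm] at hlow hquadle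
  have : (star (s•u₁+t•u₂) ⬝ᵥ A.mulVec (s•u₁+t•u₂)).re
      = (star (s•u₁+t•u₂) ⬝ᵥ A *ᵥ (s•u₁+t•u₂)).re := rfl
  linarith [hlow, hquadle]
end

section
/- Let A be an n×n Hermitian matrix (n ≥ 3) all of whose off-diagonal entries are purely imaginary. Then λ_{n-1} ≥ a_{n-2}, where λ₁ ≤ ⋯ ≤ λₙ are the eigenvalues and a₁ ≤ ⋯ ≤ aₙ the sorted diagonal entries. -/
open Matrix Complex Finset

lemma wside {n : ℕ} (A : Matrix (Fin n) (Fin n) ℂ)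
    (hoff : ∀ i j, i ≠ j → ∃ t : ℝ, A i j = (t : ℂ) * Complex.I)
    (a : ℝ) (x : Fin n → ℂ) (him : ∀ i, (x i).im = 0)
    (hsupp : ∀ i, x i ≠ 0 → a ≤ (A i i).re) :
    a * (∑ i, Complex.normSq (x i)) ≤ (star x ⬝ᵥ (A *ᵥ x)).re := by
  have hx : ∀ i, x i = ((x i).re : ℂ) := fun i => by
    apply Complex.ext <;> simp [him i]
  have h1 : (star x ⬝ᵥ (A *ᵥ x)).re = ∑ i, ((x i).re)^2 * (A i i).re := by
    simp only [dotProduct, Matrix.mulVec, Pi.star_apply, Complex.re_sum, Finset.mul_sum]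
    refine Finset.sum_congr rfl fun i _ => ?_
    rw [Finset.sum_eq_single i]
    · rw [hx i]; simp; ring
    · intro j _ hj
      obtain ⟨t, ht⟩ := hoff i j (Ne.symm hj)
      rw [hx i, hx j, ht]
      have : ((x i).re : ℂ) * ((t:ℂ) * Complex.I * ((x j).re : ℂ))
          = (((x i).re * t * (x j).re : ℝ) : ℂ) * Complex.I := by push_cast; ring
      simp [this]
    · simp
  rw [h1, Finset.mul_sum]
  refine Finset.sum_le_sum fun i _ => ?_
  have hns : Complex.normSq (x i) = ((x i).re)^2 := by
    simp [Complex.normSq_apply, him i, sq]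
  rw [hns]
  rcases eq_or_ne (x i) 0 with h | h
  · simp [h]
  · have := hsupp i h
    have h2 : (0:ℝ) ≤ ((x i).re)^2 := sq_nonneg _
    nlinarith

lemma eside {n : ℕ} {A : Matrix (Fin n) (Fin n) ℂ} (hA : A.IsHermitian) (a : ℝ)
    (S : Finset (Fin n)) (hS : ∀ i ∈ S, hA.eigenvalues i < a)
    (x : EuclideanSpace ℂ (Fin n)) (hx : x ≠ 0)
    (hmem : x ∈ Submodule.span ℂ (Set.range (fun i : S => (hA.eigenvectorBasis i : EuclideanSpace ℂ (Fin n))))) :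
    (star (x : Fin n → ℂ) ⬝ᵥ (A *ᵥ x)).re < a * (∑ i, Complex.normSq (x i)) := by
  rw [Submodule.mem_span_range_iff_exists_fun] at hmem
  obtain ⟨c, hc⟩ := hmem
  set v : S → EuclideanSpace ℂ (Fin n) := fun i => hA.eigenvectorBasis i with hv
  have hortho : Orthonormal ℂ v :=
    (hA.eigenvectorBasis.orthonormal).comp _ Subtype.val_injective
  have hAx : (A *ᵥ (x : Fin n → ℂ)) = ((∑ i : S, ((hA.eigenvalues i : ℂ) * c i) • v i : EuclideanSpace ℂ (Fin n)) : Fin n → ℂ) := by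
    rw [← hc]
    show A.mulVecLin _ = _
    simp only [WithLp.ofLp_sum, WithLp.ofLp_smul]
    rw [map_sum]
    refine Finset.sum_congr rfl fun i _ => ?_
    rw [_root_.map_smul]
    show c i • (A *ᵥ (v i : Fin n → ℂ)) = _
    have h : A *ᵥ (v i : Fin n → ℂ) = hA.eigenvalues i • (v i : Fin n → ℂ) :=
      hA.mulVec_eigenvectorBasis i
    rw [h]
    funext j
    show c i * _ = _
    simp only [PiLp.smul_apply, Pi.smul_apply, smul_eq_mul, Complex.real_smul]
    ring
  have hinner : (star (x : Fin n → ℂ) ⬝ᵥ (A *ᵥ x)) = ∑ i : S, (starRingEnd ℂ) (c i) * ((hA.eigenvalues i : ℂ) * c i) := by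
    have h0 : (star (x : Fin n → ℂ) ⬝ᵥ (A *ᵥ x))
        = @inner ℂ _ _ x ((∑ i : S, ((hA.eigenvalues i : ℂ) * c i) • v i : EuclideanSpace ℂ (Fin n))) := by
      rw [hAx, EuclideanSpace.inner_eq_star_dotProduct, dotProduct_comm]
    rw [h0, ← hc]
    exact hortho.inner_sum c _ univ
  have hnorm : (∑ i, Complex.normSq (x i)) = ∑ i : S, Complex.normSq (c i) := by
    have h2 : (star (x : Fin n → ℂ) ⬝ᵥ (x : Fin n → ℂ)) = ∑ i : S, (starRingEnd ℂ) (c i) * (c i) := by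
      have h0 : (star (x : Fin n → ℂ) ⬝ᵥ (x : Fin n → ℂ)) = @inner ℂ _ _ x x := by
        rw [EuclideanSpace.inner_eq_star_dotProduct, dotProduct_comm]
      rw [h0, ← hc]
      exact hortho.inner_sum c c univ
    have h3 := congrArg Complex.re h2
    simpa [dotProduct, Complex.re_sum, ← Complex.normSq_eq_conj_mul_self] using h3
  have hre : (star (x : Fin n → ℂ) ⬝ᵥ (A *ᵥ x)).re
      = ∑ i : S, hA.eigenvalues i * Complex.normSq (c i) := by
    rw [hinner, Complex.re_sum]
    refine Finset.sum_congr rfl fun i _ => ?_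
    have h4 : (starRingEnd ℂ) (c i) * ((hA.eigenvalues i : ℂ) * c i)
        = ((hA.eigenvalues i * Complex.normSq (c i) : ℝ) : ℂ) := by
      push_cast
      rw [show (starRingEnd ℂ) (c i) * ((hA.eigenvalues i : ℂ) * c i)
        = (hA.eigenvalues i : ℂ) * ((starRingEnd ℂ) (c i) * c i) from by ring,
        ← Complex.normSq_eq_conj_mul_self]
    rw [h4, Complex.ofReal_re]
  have hex : ∃ i : S, c i ≠ 0 := by
    by_contra h
    push_neg at h
    apply hx
    rw [← hc]
    simp [h]
  obtain ⟨i₀, hi₀⟩ := hex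
  rw [hre, hnorm, Finset.mul_sum]
  refine Finset.sum_lt_sum (fun i _ => ?_) ⟨i₀, Finset.mem_univ _, ?_⟩
  · exact mul_le_mul_of_nonneg_right (le_of_lt (hS i i.2)) (Complex.normSq_nonneg _)
  · exact mul_lt_mul_of_pos_right (hS i₀ i₀.2) (Complex.normSq_pos.mpr hi₀)

lemma count_ge {n : ℕ} (f : Fin n → ℝ) (k : Fin n) :
    n - (k : ℕ) ≤ (Finset.univ.filter (fun i => f (Tuple.sort f k) ≤ f i)).card := by
  have hsub : (Finset.Ici k).image (Tuple.sort f)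
      ⊆ Finset.univ.filter (fun i => f (Tuple.sort f k) ≤ f i) := by
    intro j hj
    simp only [Finset.mem_image, Finset.mem_Ici] at hj
    obtain ⟨m, hm, rfl⟩ := hj
    simp only [Finset.mem_filter, Finset.mem_univ, true_and]
    exact Tuple.monotone_sort f hm
  calc n - (k : ℕ) = (Finset.Ici k).card := (Fin.card_Ici k).symm
    _ = ((Finset.Ici k).image (Tuple.sort f)).card :=
        (Finset.card_image_of_injective _ (Tuple.sort f).injective).symm
    _ ≤ _ := Finset.card_le_card hsub

lemma count_le {n : ℕ} (f : Fin n → ℝ) (k : Fin n) (a : ℝ) (h : f (Tuple.sort f k) < a) :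
    (k : ℕ) + 1 ≤ (Finset.univ.filter (fun i => f i < a)).card := by
  have hsub : (Finset.Iic k).image (Tuple.sort f)
      ⊆ Finset.univ.filter (fun i => f i < a) := by
    intro j hj
    simp only [Finset.mem_image, Finset.mem_Iic] at hj
    obtain ⟨m, hm, rfl⟩ := hj
    simp only [Finset.mem_filter, Finset.mem_univ, true_and]
    exact lt_of_le_of_lt (Tuple.monotone_sort f hm) h
  calc (k : ℕ) + 1 = (Finset.Iic k).card := (Fin.card_Iic k).symm
    _ = ((Finset.Iic k).image (Tuple.sort f)).card :=
        (Finset.card_image_of_injective _ (Tuple.sort f).injective).symm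
    _ ≤ _ := Finset.card_le_card hsub

noncomputable def reCoordsLm (n : ℕ) : EuclideanSpace ℂ (Fin n) →ₗ[ℝ] (Fin n → ℝ) where
  toFun x i := (x i).re
  map_add' x y := by funext i; simp [Complex.add_re]
  map_smul' r x := by funext i; simp [Complex.real_smul]

lemma singles_li {n : ℕ} (T : Finset (Fin n)) :
    LinearIndependent ℝ (fun i : T =>
      (EuclideanSpace.single (i : Fin n) (1:ℂ) : EuclideanSpace ℂ (Fin n))) := by
  have h1 : LinearIndependent ℝ (fun i : T => (Pi.single (i : Fin n) (1:ℝ) : Fin n → ℝ)) := by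
    have h2 := (Pi.basisFun ℝ (Fin n)).linearIndependent.comp
      (Subtype.val : T → Fin n) Subtype.val_injective
    convert h2 using 1
    funext i
    simp [Pi.basisFun_apply]
  apply LinearIndependent.of_comp (reCoordsLm n)
  convert h1 using 1
  funext i j
  simp [reCoordsLm, EuclideanSpace.single_apply, Pi.single_apply, apply_ite Complex.re]

theorem stmt6 (n : ℕ) (hn : 3 ≤ n) (A : Matrix (Fin n) (Fin n) ℂ)
    (hA : A.IsHermitian)
    (hoff : ∀ i j, i ≠ j → ∃ t : ℝ, A i j = (t : ℂ) * Complex.I) :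
    sortedDiag A ⟨n - 3, by omega⟩ ≤ sortedEigs hA ⟨n - 2, by omega⟩ := by
  classical
  by_contra hlt
  push_neg at hlt
  set a : ℝ := sortedDiag A ⟨n - 3, by omega⟩ with ha
  set d : Fin n → ℝ := fun i => (A i i).re with hd
  set T : Finset (Fin n) := Finset.univ.filter (fun i => a ≤ d i) with hTdef
  set S : Finset (Fin n) := Finset.univ.filter (fun i => hA.eigenvalues i < a) with hSdef
  have hTcard : 3 ≤ T.card := by
    have h := count_ge d ⟨n - 3, by omega⟩
    have h2 : d (Tuple.sort d ⟨n - 3, by omega⟩) = a := rfl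
    rw [h2] at h
    exact le_trans (by omega : 3 ≤ n - (n - 3)) h
  have hScard : n - 1 ≤ S.card := by
    have h := count_le hA.eigenvalues ⟨n - 2, by omega⟩ a hlt
    exact le_trans (by omega : n - 1 ≤ (n - 2) + 1) h
  set W : Submodule ℝ (EuclideanSpace ℂ (Fin n)) :=
    Submodule.span ℝ (Set.range (fun i : T =>
      (EuclideanSpace.single (i : Fin n) (1:ℂ) : EuclideanSpace ℂ (Fin n)))) with hWdef
  set E' : Submodule ℂ (EuclideanSpace ℂ (Fin n)) :=
    Submodule.span ℂ (Set.range (fun i : S =>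
      (hA.eigenvectorBasis i : EuclideanSpace ℂ (Fin n)))) with hEdef
  have hWrank : Module.finrank ℝ W = T.card := by
    rw [hWdef, finrank_span_eq_card (singles_li T), Fintype.card_coe]
  have hE'rank : Module.finrank ℂ E' = S.card := by
    have hli : LinearIndependent ℂ (fun i : S =>
        (hA.eigenvectorBasis i : EuclideanSpace ℂ (Fin n))) :=
      (hA.eigenvectorBasis.orthonormal.comp _ Subtype.val_injective).linearIndependent
    rw [hEdef, finrank_span_eq_card hli, Fintype.card_coe]
  have hErank : Module.finrank ℝ (E'.restrictScalars ℝ) = 2 * S.card := by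
    have h1 : Module.finrank ℝ (E'.restrictScalars ℝ) = Module.finrank ℝ E' := rfl
    rw [h1, ← Module.finrank_mul_finrank ℝ ℂ E', Complex.finrank_real_complex, hE'rank]
  have hVrank : Module.finrank ℝ (EuclideanSpace ℂ (Fin n)) = 2 * n := by
    rw [← Module.finrank_mul_finrank ℝ ℂ (EuclideanSpace ℂ (Fin n)),
      Complex.finrank_real_complex, finrank_euclideanSpace_fin]
  have hsum := Submodule.finrank_sup_add_finrank_inf_eq W (E'.restrictScalars ℝ)
  have hle : Module.finrank ℝ ((W ⊔ E'.restrictScalars ℝ : Submodule ℝ _)) ≤ 2 * n :=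
    hVrank ▸ Submodule.finrank_le _
  have hTn : T.card ≤ n := le_trans (Finset.card_le_univ T) (by simp)
  have hSn : S.card ≤ n := le_trans (Finset.card_le_univ S) (by simp)
  have hpos : 0 < Module.finrank ℝ ((W ⊓ E'.restrictScalars ℝ : Submodule ℝ _)) := by
    rw [hWrank, hErank] at hsum
    omega
  have hne : (W ⊓ E'.restrictScalars ℝ) ≠ ⊥ := by
    intro h
    rw [h] at hpos
    simp at hpos
  obtain ⟨x, hxmem, hx0⟩ := Submodule.exists_mem_ne_zero_of_ne_bot hne
  obtain ⟨hxW, hxE⟩ := hxmem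
  have hWP : ∀ y ∈ W, (∀ i, (y i).im = 0) ∧ (∀ i, i ∉ T → y i = 0) := by
    intro y hy
    rw [hWdef] at hy
    induction hy using Submodule.span_induction with
    | mem z hz =>
        obtain ⟨i, rfl⟩ := hz
        constructor
        · intro j
          simp [EuclideanSpace.single_apply, apply_ite Complex.im]
        · intro j hj
          have : j ≠ (i : Fin n) := fun h => hj (h ▸ i.2)
          simp [EuclideanSpace.single_apply, this]
    | zero => exact ⟨fun i => rfl, fun i _ => rfl⟩
    | add y z _ _ hy hz =>
        refine ⟨fun i => ?_, fun i hi => ?_⟩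
        · show (y i + z i).im = 0
          rw [Complex.add_im, hy.1 i, hz.1 i, add_zero]
        · show y i + z i = 0
          rw [hy.2 i hi, hz.2 i hi, add_zero]
    | smul r y _ hy =>
        refine ⟨fun i => ?_, fun i hi => ?_⟩
        · show (r • y i).im = 0
          rw [Complex.real_smul, Complex.mul_im]
          simp [hy.1 i]
        · show r • y i = 0
          rw [hy.2 i hi, smul_zero]
  obtain ⟨him, hzero⟩ := hWP x hxW
  have hsupp : ∀ i, x i ≠ 0 → a ≤ (A i i).re := by
    intro i hxi
    by_contra hcon
    push_neg at hcon
    have : i ∉ T := by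
      rw [hTdef]
      simp only [Finset.mem_filter, Finset.mem_univ, true_and]
      exact not_le.mpr hcon
    exact hxi (hzero i this)
  have h1 := wside A hoff a x him hsupp
  have h2 := eside hA a S (fun i hi => (Finset.mem_filter.mp hi).2) x hx0 hxE
  exact absurd (lt_of_le_of_lt h1 h2) (lt_irrefl _)
end

section
/- Let A be an n×n Hermitian matrix all of whose off-diagonal entries are purely imaginary. Then for every 1 ≤ k ≤ ⌈n/2⌉, λ_{n-k+1} ≥ a_{n-2k+2}, where λ₁ ≤ ⋯ ≤ λₙ are the eigenvalues and a₁ ≤ ⋯ ≤ aₙ the sorted diagonal entries. -/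
open Matrix Complex Finset

namespace Helper

variable {m : ℕ} {M : Matrix (Fin m) (Fin m) ℂ}


variable {m : ℕ} {M : Matrix (Fin m) (Fin m) ℂ}

noncomputable def ev (hM : M.IsHermitian) : Fin m → (Fin m → ℂ) :=
  fun i => ⇑(hM.eigenvectorBasis i)

lemma star_dot_eq_inner (x y : EuclideanSpace ℂ (Fin m)) :
    star (⇑x : Fin m → ℂ) ⬝ᵥ (⇑y : Fin m → ℂ) = inner ℂ x y := by
  rw [PiLp.inner_apply]
  simp [dotProduct, RCLike.inner_apply, mul_comm]

lemma ev_orth (hM : M.IsHermitian) (i j : Fin m) :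
    star (ev hM i) ⬝ᵥ ev hM j = if i = j then 1 else 0 := by
  have h := hM.eigenvectorBasis.orthonormal
  rw [ev, ev, star_dot_eq_inner]
  rcases eq_or_ne i j with rfl | hij
  · simp only [if_pos rfl]
    rw [inner_self_eq_norm_sq_to_K, h.1 i]
    norm_num
  · rw [h.2 hij, if_neg hij]

lemma sum_star_dot {ι : Type*} [DecidableEq ι] (s : Finset ι) (f : ι → (Fin m → ℂ)) (w : Fin m → ℂ) :
    star (∑ i ∈ s, f i) ⬝ᵥ w = ∑ i ∈ s, star (f i) ⬝ᵥ w := by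
  induction s using Finset.induction with
  | empty => simp
  | insert _ _ h ih => rw [Finset.sum_insert h, Finset.sum_insert h, star_add, add_dotProduct, ih]

lemma dot_sum {ι : Type*} [DecidableEq ι] (s : Finset ι) (u : Fin m → ℂ) (f : ι → (Fin m → ℂ)) :
    u ⬝ᵥ (∑ i ∈ s, f i) = ∑ i ∈ s, u ⬝ᵥ f i := by
  induction s using Finset.induction with
  | empty => simp
  | insert _ _ h ih => rw [Finset.sum_insert h, Finset.sum_insert h, dotProduct_add, ih]

lemma mulVec_sum' {ι : Type*} [DecidableEq ι] (s : Finset ι) (f : ι → (Fin m → ℂ)) :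
    M *ᵥ (∑ i ∈ s, f i) = ∑ i ∈ s, M *ᵥ f i := by
  induction s using Finset.induction with
  | empty => simp
  | insert _ _ h ih => rw [Finset.sum_insert h, Finset.sum_insert h, Matrix.mulVec_add, ih]

lemma combo_dot (s : Finset (Fin m)) (c : Fin m → ℂ) (hM : M.IsHermitian)
    (w : Fin m → ℂ) :
    star (∑ i ∈ s, c i • ev hM i) ⬝ᵥ w
      = ∑ i ∈ s, (starRingEnd ℂ) (c i) * (star (ev hM i) ⬝ᵥ w) := by
  rw [sum_star_dot]
  refine Finset.sum_congr rfl fun i _ => ?_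
  rw [star_smul, smul_dotProduct]
  simp

lemma mulVec_combo (s : Finset (Fin m)) (c : Fin m → ℂ) (hM : M.IsHermitian) :
    M *ᵥ (∑ i ∈ s, c i • ev hM i) = ∑ i ∈ s, (c i * hM.eigenvalues i) • ev hM i := by
  rw [mulVec_sum']
  refine Finset.sum_congr rfl fun i _ => ?_
  rw [Matrix.mulVec_smul]
  have h : M *ᵥ ev hM i = (hM.eigenvalues i) • ev hM i := hM.mulVec_eigenvectorBasis i
  rw [h]
  ext j
  simp [Pi.smul_apply, Complex.real_smul]
  ring

lemma combo_quad (s : Finset (Fin m)) (c : Fin m → ℂ) (hM : M.IsHermitian) :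
    star (∑ i ∈ s, c i • ev hM i) ⬝ᵥ (M *ᵥ ∑ i ∈ s, c i • ev hM i)
      = ∑ i ∈ s, (hM.eigenvalues i : ℂ) * Complex.normSq (c i) := by
  rw [mulVec_combo, combo_dot]
  refine Finset.sum_congr rfl fun i hi => ?_
  rw [dot_sum]
  rw [Finset.sum_eq_single i]
  · rw [dotProduct_smul, ev_orth, if_pos rfl, smul_eq_mul, mul_one]
    rw [← mul_assoc, mul_comm ((starRingEnd ℂ) (c i)) (c i), Complex.mul_conj, mul_comm]
  · intro j hj hne
    rw [dotProduct_smul, ev_orth, if_neg (Ne.symm hne), smul_eq_mul, mul_zero]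
  · intro h; exact absurd hi h

lemma combo_norm (s : Finset (Fin m)) (c : Fin m → ℂ) (hM : M.IsHermitian) :
    star (∑ i ∈ s, c i • ev hM i) ⬝ᵥ (∑ i ∈ s, c i • ev hM i)
      = ∑ i ∈ s, (Complex.normSq (c i) : ℂ) := by
  rw [combo_dot]
  refine Finset.sum_congr rfl fun i hi => ?_
  rw [dot_sum]
  rw [Finset.sum_eq_single i]
  · rw [dotProduct_smul, ev_orth, if_pos rfl, smul_eq_mul, mul_one]
    rw [mul_comm, Complex.mul_conj]
  · intro j hj hne
    rw [dotProduct_smul, ev_orth, if_neg (Ne.symm hne), smul_eq_mul, mul_zero]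
  · intro h; exact absurd hi h


lemma mem_span_ev (hM : M.IsHermitian) (s : Finset (Fin m)) (x : Fin m → ℂ)
    (hx : x ∈ Submodule.span ℂ (ev hM '' ↑s)) :
    ∃ c : Fin m → ℂ, x = ∑ i ∈ s, c i • ev hM i := by
  rcases (Finsupp.mem_span_image_iff_linearCombination ℂ).1 hx with ⟨l, hl, rfl⟩
  refine ⟨fun i => l i, ?_⟩
  rw [Finsupp.linearCombination_apply, Finsupp.sum]
  refine Finset.sum_subset ((Finsupp.mem_supported ℂ l).1 hl) ?_
  intro i _ hi
  simp [Finsupp.notMem_support_iff.1 hi]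


lemma dot_combo {ι : Type*} [DecidableEq ι] (w : ι → (Fin m → ℂ))
    (horth : ∀ i j, star (w i) ⬝ᵥ w j = if i = j then 1 else 0)
    (t : Finset ι) (g : ι → ℂ) (j : ι) :
    star (w j) ⬝ᵥ (∑ i ∈ t, g i • w i) = if j ∈ t then g j else 0 := by
  rw [dot_sum]
  rcases Finset.decidableMem j t with hj | hj
  · rw [if_neg hj]
    refine Finset.sum_eq_zero fun i hi => ?_
    rw [dotProduct_smul, horth, if_neg ?_, smul_zero]
    · intro h; exact hj (h ▸ hi)
  · rw [if_pos hj, Finset.sum_eq_single j]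
    · rw [dotProduct_smul, horth, if_pos rfl, smul_eq_mul, mul_one]
    · intro i hi hne
      rw [dotProduct_smul, horth, if_neg (Ne.symm hne), smul_zero]
    · intro h; exact absurd hj h

lemma finrank_span_orth (w : Fin m → (Fin m → ℂ))
    (horth : ∀ i j, star (w i) ⬝ᵥ w j = if i = j then 1 else 0)
    (s : Finset (Fin m)) :
    Module.finrank ℂ (Submodule.span ℂ (w '' ↑s)) = s.card := by
  have hli : LinearIndependent ℂ (fun i : ↥s => w i) := by
    rw [Fintype.linearIndependent_iff]
    intro g hg j
    have h := congrArg (fun v => star (w (j : Fin m)) ⬝ᵥ v) hg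
    rw [dot_sum] at h
    rw [Finset.sum_eq_single j] at h
    · simpa [dotProduct_smul, horth] using h
    · intro i _ hne
      rw [dotProduct_smul, horth, if_neg ?_, smul_zero]
      exact fun hc => hne (Subtype.ext hc.symm)
    · simp
  have := finrank_span_eq_card hli
  have hr : Set.range (fun i : ↥s => w i) = w '' ↑s := by
    ext y
    constructor
    · rintro ⟨i, rfl⟩; exact ⟨i, i.2, rfl⟩
    · rintro ⟨i, hi, rfl⟩; exact ⟨⟨i, hi⟩, rfl⟩
  rw [hr] at this
  rw [this, Fintype.card_coe]

lemma expand (hM : M.IsHermitian) (x : Fin m → ℂ) :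
    x = ∑ i, (star (ev hM i) ⬝ᵥ x) • ev hM i := by
  set e := WithLp.linearEquiv 2 ℂ (Fin m → ℂ) with he
  set x' : EuclideanSpace ℂ (Fin m) := e.symm x with hx'
  have h := hM.eigenvectorBasis.sum_repr' x'
  have h2 := congrArg e h
  rw [map_sum] at h2
  have h3 : ∀ i, e ((inner ℂ (hM.eigenvectorBasis i) x' : ℂ) • hM.eigenvectorBasis i)
      = (star (ev hM i) ⬝ᵥ x) • ev hM i := by
    intro i
    rw [_root_.map_smul]
    congr 1
    exact (star_dot_eq_inner _ _).symm
  rw [Finset.sum_congr rfl (fun i _ => h3 i)] at h2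
  exact h2.symm

lemma re_quad (hM : M.IsHermitian) (s : Finset (Fin m)) (c : Fin m → ℂ) :
    (star (∑ i ∈ s, c i • ev hM i) ⬝ᵥ (M *ᵥ ∑ i ∈ s, c i • ev hM i)).re
      = ∑ i ∈ s, hM.eigenvalues i * Complex.normSq (c i) := by
  rw [combo_quad, Complex.re_sum]
  refine Finset.sum_congr rfl fun i _ => ?_
  rw [← Complex.ofReal_mul, Complex.ofReal_re]

lemma re_self_dot (x : Fin m → ℂ) :
    (star x ⬝ᵥ x).re = ∑ j, Complex.normSq (x j) := by
  rw [dotProduct, Complex.re_sum]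
  refine Finset.sum_congr rfl fun j _ => ?_
  rw [Pi.star_apply, RCLike.star_def, mul_comm, Complex.mul_conj, Complex.ofReal_re]

lemma re_norm (hM : M.IsHermitian) (s : Finset (Fin m)) (c : Fin m → ℂ) :
    (star (∑ i ∈ s, c i • ev hM i) ⬝ᵥ (∑ i ∈ s, c i • ev hM i)).re
      = ∑ i ∈ s, Complex.normSq (c i) := by
  rw [combo_norm, Complex.re_sum]
  refine Finset.sum_congr rfl fun i _ => ?_
  rw [Complex.ofReal_re]

lemma courant {k : ℕ} (hM : M.IsHermitian)
    (hk1 : 1 ≤ k) (hkm : k ≤ m) (V : Submodule ℂ (Fin m → ℂ))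
    (hdim : k ≤ Module.finrank ℂ V) (a : ℝ)
    (hV : ∀ x ∈ V, a * (star x ⬝ᵥ x).re ≤ (star x ⬝ᵥ (M *ᵥ x)).re) :
    a ≤ (hM.eigenvalues ∘ Tuple.sort hM.eigenvalues) ⟨m - k, by omega⟩ := by
  classical
  set g := Tuple.sort hM.eigenvalues with hg
  set μ := hM.eigenvalues (g ⟨m - k, by omega⟩) with hμ
  -- the linear map picking out the top k-1 coordinates
  let ψ : Fin (k-1) → Fin m := fun t => g ⟨m - k + 1 + t, by omega⟩
  let φ : V →ₗ[ℂ] (Fin (k-1) → ℂ) :=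
    { toFun := fun x t => star (ev hM (ψ t)) ⬝ᵥ (x : Fin m → ℂ)
      map_add' := by
        intro x y; funext t
        simp [Submodule.coe_add, dotProduct_add]
      map_smul' := by
        intro a x; funext t
        simp [Submodule.coe_smul, dotProduct_smul] }
  -- find a nonzero kernel element
  have hker : ∃ x : V, x ≠ 0 ∧ φ x = 0 := by
    by_contra hcon
    push_neg at hcon
    have hinj : Function.Injective φ := by
      rw [← LinearMap.ker_eq_bot, Submodule.eq_bot_iff]
      intro x hx
      by_contra hx0
      exact (hcon x hx0) hx
    have := LinearMap.finrank_le_finrank_of_injective hinj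
    rw [Module.finrank_pi] at this
    simp only [Fintype.card_fin] at this
    omega
  obtain ⟨x, hx0, hφx⟩ := hker
  set c : Fin m → ℂ := fun i => star (ev hM i) ⬝ᵥ (x : Fin m → ℂ) with hc
  have hexp : (x : Fin m → ℂ) = ∑ i, c i • ev hM i := expand hM x
  have hczero : ∀ t : Fin (k-1), c (ψ t) = 0 := fun t => congrFun hφx t
  -- quadratic form value
  have hquad : (star (x : Fin m → ℂ) ⬝ᵥ (M *ᵥ (x : Fin m → ℂ))).re
      = ∑ i, hM.eigenvalues i * Complex.normSq (c i) := by
    conv_lhs => rw [hexp]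
    exact re_quad hM Finset.univ c
  have hnorm : (star (x : Fin m → ℂ) ⬝ᵥ (x : Fin m → ℂ)).re
      = ∑ i, Complex.normSq (c i) := by
    conv_lhs => rw [hexp]
    exact re_norm hM Finset.univ c
  -- positivity of the norm
  have hxv : (x : Fin m → ℂ) ≠ 0 := fun h => hx0 (Subtype.ext h)
  have hpos : 0 < (star (x : Fin m → ℂ) ⬝ᵥ (x : Fin m → ℂ)).re := by
    rw [re_self_dot]
    obtain ⟨j, hj⟩ := Function.ne_iff.1 hxv
    refine Finset.sum_pos' (fun j _ => Complex.normSq_nonneg _) ⟨j, Finset.mem_univ j, ?_⟩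
    exact Complex.normSq_pos.2 hj
  -- monotonicity bound
  have hmono := Tuple.monotone_sort hM.eigenvalues
  have hbound : ∑ i, hM.eigenvalues i * Complex.normSq (c i)
      ≤ ∑ i, μ * Complex.normSq (c i) := by
    refine Finset.sum_le_sum fun i _ => ?_
    rcases eq_or_ne (c i) 0 with h0 | h0
    · simp [h0]
    refine mul_le_mul_of_nonneg_right ?_ (Complex.normSq_nonneg _)
    have hi : (g.symm i : ℕ) ≤ m - k := by
      by_contra hcon
      push_neg at hcon
      apply h0
      have ht := hczero ⟨(g.symm i : ℕ) - (m - k + 1), by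
        have := (g.symm i).isLt; omega⟩
      have : ψ ⟨(g.symm i : ℕ) - (m - k + 1), by have := (g.symm i).isLt; omega⟩ = i := by
        show g _ = i
        have : (⟨m - k + 1 + ((g.symm i : ℕ) - (m - k + 1)), by
            have := (g.symm i).isLt; omega⟩ : Fin m) = g.symm i := by
          apply Fin.ext
          simp only []
          omega
        rw [this, Equiv.apply_symm_apply]
      rwa [this] at ht
    have h1 : hM.eigenvalues i = (hM.eigenvalues ∘ g) (g.symm i) := by
      simp [Equiv.apply_symm_apply]
    rw [h1, hμ]
    exact hmono (by rw [Fin.le_def]; simpa using hi)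
  have hsum : ∑ i, μ * Complex.normSq (c i)
      = μ * (star (x : Fin m → ℂ) ⬝ᵥ (x : Fin m → ℂ)).re := by
    rw [hnorm, Finset.mul_sum]
  have h1 := hV (x : Fin m → ℂ) x.2
  have h2 : a * (star (x : Fin m → ℂ) ⬝ᵥ (x : Fin m → ℂ)).re
      ≤ μ * (star (x : Fin m → ℂ) ⬝ᵥ (x : Fin m → ℂ)).re := by
    calc a * _ ≤ _ := h1
    _ = ∑ i, hM.eigenvalues i * Complex.normSq (c i) := hquad
    _ ≤ ∑ i, μ * Complex.normSq (c i) := hbound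
    _ = _ := hsum
  exact le_of_mul_le_mul_right (by simpa [mul_comm] using h2) hpos

lemma conj_quad_flip (him : ∀ i j, (M i j).re = 0) (z : Fin m → ℂ) :
    (star (star z) ⬝ᵥ (M *ᵥ star z)).re = - (star z ⬝ᵥ (M *ᵥ z)).re := by
  rw [star_star]
  simp only [dotProduct, Matrix.mulVec, Pi.star_apply, Complex.re_sum, Finset.mul_sum,
    ← Finset.sum_neg_distrib]
  refine Finset.sum_congr rfl fun j _ => Finset.sum_congr rfl fun t _ => ?_
  have hw : (starRingEnd ℂ) (M j t) = - M j t := by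
    apply Complex.ext <;> simp [him j t]
  have : z j * (M j t * star (z t))
      = (starRingEnd ℂ) (star (z j) * ((starRingEnd ℂ) (M j t) * z t)) := by
    simp only [_root_.map_mul, Complex.conj_conj, Pi.star_apply, RCLike.star_def]
  rw [this, hw, Complex.conj_re]
  ring_nf
  simp [neg_mul, mul_neg]

lemma neg_quad (hH : M.IsHermitian) (s : Finset (Fin m)) (c : Fin m → ℂ)
    (hneg : ∀ i ∈ s, hH.eigenvalues i < 0) (x : Fin m → ℂ)
    (hx : x = ∑ i ∈ s, c i • ev hH i) (hx0 : x ≠ 0) :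
    (star x ⬝ᵥ (M *ᵥ x)).re < 0 := by
  subst hx
  rw [re_quad]
  have hex : ∃ i ∈ s, c i ≠ 0 := by
    by_contra h
    push_neg at h
    exact hx0 (Finset.sum_eq_zero fun i hi => by rw [h i hi, zero_smul])
  obtain ⟨i, hi, hci⟩ := hex
  have := Finset.sum_lt_sum (s := s) (f := fun i => hH.eigenvalues i * Complex.normSq (c i))
    (g := fun _ => (0:ℝ))
    (fun j hj => mul_nonpos_of_nonpos_of_nonneg (le_of_lt (hneg j hj)) (Complex.normSq_nonneg _))
    ⟨i, hi, mul_neg_of_neg_of_pos (hneg i hi) (Complex.normSq_pos.2 hci)⟩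
  simpa using this

lemma exists_nonneg_subspace {k : ℕ} (hm : m = 2 * k - 1) (hk : 1 ≤ k)
    (hH : M.IsHermitian) (him : ∀ i j, (M i j).re = 0) :
    ∃ P : Submodule ℂ (Fin m → ℂ), k ≤ Module.finrank ℂ P ∧
      ∀ y ∈ P, 0 ≤ (star y ⬝ᵥ (M *ᵥ y)).re := by
  classical
  set Nset := Finset.univ.filter (fun i : Fin m => hH.eigenvalues i < 0) with hNset
  set Pset := Finset.univ.filter (fun i : Fin m => ¬ hH.eigenvalues i < 0) with hPset
  set N := Submodule.span ℂ (ev hH '' ↑Nset) with hN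
  set cN := Submodule.span ℂ ((fun i => star (ev hH i)) '' ↑Nset) with hcN
  have hcards : Nset.card + Pset.card = m := by
    rw [hNset, hPset]
    rw [Finset.card_filter_add_card_filter_not]
    simp
  -- conjugated family is orthonormal
  have horthc : ∀ i j, star (star (ev hH i)) ⬝ᵥ star (ev hH j) = if i = j then 1 else 0 := by
    intro i j
    have : star (star (ev hH i)) ⬝ᵥ star (ev hH j)
        = (starRingEnd ℂ) (star (ev hH i) ⬝ᵥ ev hH j) := by
      simp only [dotProduct, map_sum, _root_.map_mul, Pi.star_apply, RCLike.star_def,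
        Complex.conj_conj]
    rw [this, ev_orth]
    split <;> simp
  have hNd : Module.finrank ℂ N = Nset.card := finrank_span_orth _ (ev_orth hH) _
  have hcNd : Module.finrank ℂ cN = Nset.card := finrank_span_orth _ horthc _
  -- N and cN intersect trivially
  have hdisj : N ⊓ cN = ⊥ := by
    rw [Submodule.eq_bot_iff]
    intro x hx
    by_contra hx0
    obtain ⟨hxN, hxcN⟩ := Submodule.mem_inf.1 hx
    obtain ⟨c, hc⟩ := mem_span_ev hH Nset x hxN
    have hneg : (star x ⬝ᵥ (M *ᵥ x)).re < 0 := by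
      refine neg_quad hH Nset c (fun i hi => ?_) x hc hx0
      simpa [hNset] using hi
    -- from membership in cN, derive positivity
    have hx2 : x ∈ Submodule.span ℂ ((fun i => star (ev hH i)) '' ↑Nset) := hxcN
    rw [Finsupp.mem_span_image_iff_linearCombination] at hx2
    obtain ⟨l, hl, hlx⟩ := hx2
    have hxz : x = ∑ i ∈ Nset, l i • star (ev hH i) := by
      rw [← hlx, Finsupp.linearCombination_apply, Finsupp.sum]
      refine Finset.sum_subset ((Finsupp.mem_supported ℂ l).1 hl) ?_
      intro i _ hi
      simp [Finsupp.notMem_support_iff.1 hi]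
    have hzc : star x = ∑ i ∈ Nset, (starRingEnd ℂ) (l i) • ev hH i := by
      rw [hxz, star_sum]
      refine Finset.sum_congr rfl fun i _ => ?_
      rw [star_smul, star_star]
      rfl
    have hz0 : star x ≠ (0 : Fin m → ℂ) := by
      intro h
      exact hx0 (by simpa using congrArg star h)
    have hzneg : (star (star x) ⬝ᵥ (M *ᵥ star x)).re < 0 :=
      neg_quad hH Nset _ (fun i hi => by simpa [hNset] using hi) (star x) hzc hz0
    have hflip := conj_quad_flip him x
    rw [star_star] at hflip hzneg
    rw [hflip] at hzneg
    linarith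
  -- dimension count
  have hsum := Submodule.finrank_sup_add_finrank_inf_eq N cN
  rw [hdisj, hNd, hcNd] at hsum
  have hle : Module.finrank ℂ (N ⊔ cN : Submodule ℂ (Fin m → ℂ))
      ≤ Module.finrank ℂ (Fin m → ℂ) := Submodule.finrank_le _
  have hfr : Module.finrank ℂ (Fin m → ℂ) = m := by
    simp [Module.finrank_pi]
  have hNcard : 2 * Nset.card ≤ m := by
    simp only [finrank_bot, add_zero] at hsum
    omega
  refine ⟨Submodule.span ℂ (ev hH '' ↑Pset), ?_, ?_⟩
  · rw [finrank_span_orth _ (ev_orth hH)]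
    omega
  · intro y hy
    obtain ⟨c, hc⟩ := mem_span_ev hH Pset y hy
    rw [hc, re_quad]
    refine Finset.sum_nonneg fun i hi => ?_
    have : ¬ hH.eigenvalues i < 0 := by simpa [hPset] using hi
    exact mul_nonneg (not_lt.1 this) (Complex.normSq_nonneg _)

end Helper

theorem stmt10 (n : ℕ) (A : Matrix (Fin n) (Fin n) ℂ) (hA : A.IsHermitian)
    (hoff : ∀ i j, i ≠ j → ∃ t : ℝ, A i j = (t : ℂ) * Complex.I)
    (k : ℕ) (hk1 : 1 ≤ k) (hk2 : k ≤ (n + 1) / 2) :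
    sortedDiag A ⟨n + 1 - 2 * k, by omega⟩ ≤ sortedEigs hA ⟨n - k, by omega⟩ := by
  classical
  set d : Fin n → ℝ := fun i => (A i i).re with hd
  set σ := Tuple.sort d with hσ
  set m := 2 * k - 1 with hm
  have hmn : m ≤ n := by omega
  have hm1 : 1 ≤ m := by omega
  set ι : Fin m → Fin n := fun j => σ ⟨n - m + (j : ℕ), by omega⟩ with hι
  have hιinj : Function.Injective ι := by
    intro p q h
    have h2 := σ.injective h
    have h3 := congrArg Fin.val h2
    simp only [] at h3
    exact Fin.ext (by omega)
  set a := sortedDiag A ⟨n + 1 - 2 * k, by omega⟩ with ha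
  have hdiag : ∀ j : Fin m, a ≤ d (ι j) := by
    intro j
    have hmono := Tuple.monotone_sort d
    have hidx : (⟨n + 1 - 2 * k, by omega⟩ : Fin n) = ⟨n - m, by omega⟩ :=
      Fin.ext (show n + 1 - 2 * k = n - m by omega)
    have h1 : a = (d ∘ σ) ⟨n - m, by omega⟩ := by rw [ha, hidx]; rfl
    have h2 : d (ι j) = (d ∘ σ) ⟨n - m + (j : ℕ), by omega⟩ := rfl
    rw [h1, h2]
    exact hmono (by simp [Fin.le_def])
  set B := A.submatrix ι ι with hB
  have hBh : B.IsHermitian := hA.submatrix ι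
  set DB := Matrix.diagonal (fun j : Fin m => ((d (ι j) : ℝ) : ℂ)) with hDB
  set H := B - DB with hH
  have hsa : IsSelfAdjoint (fun j : Fin m => ((d (ι j) : ℝ) : ℂ)) :=
    funext fun j => by simp [Pi.star_apply, Complex.conj_ofReal]
  have hHh : H.IsHermitian := hBh.sub (Matrix.isHermitian_diagonal_of_self_adjoint _ hsa)
  have hHim : ∀ p q, (H p q).re = 0 := by
    intro p q
    rcases eq_or_ne p q with rfl | hpq
    · have hdiagA : (A (ι p) (ι p)).re = d (ι p) := rfl
      simp [hH, hB, hDB, Matrix.sub_apply, Matrix.diagonal_apply_eq, Matrix.submatrix_apply, hdiagA]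
    · obtain ⟨t, ht⟩ := hoff (ι p) (ι q) (fun h => hpq (hιinj h))
      simp [hH, hB, hDB, Matrix.sub_apply, Matrix.diagonal_apply_ne _ hpq,
        Matrix.submatrix_apply, ht, Complex.mul_re]
  obtain ⟨P, hPdim, hPq⟩ := Helper.exists_nonneg_subspace (k := k) (by omega) hk1 hHh hHim
  -- extension by zero as a linear map
  set e : (Fin m → ℂ) →ₗ[ℂ] (Fin n → ℂ) :=
    { toFun := fun y i => ∑ j, if ι j = i then y j else 0
      map_add' := by
        intro y z; funext i
        simp only [Pi.add_apply]
        rw [← Finset.sum_add_distrib]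
        exact Finset.sum_congr rfl fun j _ => by split <;> simp
      map_smul' := by
        intro cc y; funext i
        simp only [RingHom.id_apply, Pi.smul_apply, smul_eq_mul, Finset.mul_sum]
        exact Finset.sum_congr rfl fun j _ => by split <;> simp } with he
  have hcond : ∀ j' j : Fin m, (ι j' = ι j) = (j' = j) :=
    fun j' j => propext ⟨fun h => hιinj h, fun h => by rw [h]⟩
  have heapp : ∀ (y : Fin m → ℂ) (j : Fin m), e y (ι j) = y j := by
    intro y j
    show (∑ j', if ι j' = ι j then y j' else 0) = y j
    simp only [hcond]
    rw [Finset.sum_ite_eq' Finset.univ j y]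
    simp
  have hedot : ∀ (y : Fin m → ℂ) (w : Fin n → ℂ),
      star (e y) ⬝ᵥ w = ∑ j, (starRingEnd ℂ) (y j) * w (ι j) := by
    intro y w
    show (∑ i, star ((∑ j, if ι j = i then y j else 0)) * w i) = _
    calc (∑ i, star ((∑ j, if ι j = i then y j else 0)) * w i)
        = ∑ i, ∑ j, (if ι j = i then (starRingEnd ℂ) (y j) * w i else 0) := by
          refine Finset.sum_congr rfl fun i _ => ?_
          rw [star_sum, Finset.sum_mul]
          refine Finset.sum_congr rfl fun j _ => ?_
          split <;> simp
      _ = ∑ j, ∑ i, (if ι j = i then (starRingEnd ℂ) (y j) * w i else 0) := Finset.sum_comm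
      _ = ∑ j, (starRingEnd ℂ) (y j) * w (ι j) := by
          refine Finset.sum_congr rfl fun j _ => ?_
          rw [Finset.sum_ite_eq Finset.univ (ι j) (fun i => (starRingEnd ℂ) (y j) * w i)]
          simp
  have hemul : ∀ (y : Fin m → ℂ) (p : Fin m), (A *ᵥ e y) (ι p) = (B *ᵥ y) p := by
    intro y p
    show (∑ i, A (ι p) i * (∑ j, if ι j = i then y j else 0)) = ∑ j, B p j * y j
    calc (∑ i, A (ι p) i * (∑ j, if ι j = i then y j else 0))
        = ∑ i, ∑ j, (if ι j = i then A (ι p) i * y j else 0) := by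
          refine Finset.sum_congr rfl fun i _ => ?_
          rw [Finset.mul_sum]
          refine Finset.sum_congr rfl fun j _ => ?_
          split <;> simp
      _ = ∑ j, ∑ i, (if ι j = i then A (ι p) i * y j else 0) := Finset.sum_comm
      _ = ∑ j, A (ι p) (ι j) * y j := by
          refine Finset.sum_congr rfl fun j _ => ?_
          rw [Finset.sum_ite_eq Finset.univ (ι j) (fun i => A (ι p) i * y j)]
          simp
      _ = ∑ j, B p j * y j := rfl
  have heinj : Function.Injective e := by
    intro y z h
    funext j
    rw [← heapp y j, ← heapp z j, h]
  set V := P.map e with hV'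
  have hVdim : k ≤ Module.finrank ℂ V := by
    have hfr := LinearEquiv.finrank_eq (Submodule.equivMapOfInjective e heinj P)
    rw [← hV'] at hfr
    omega
  have hquadV : ∀ x ∈ V, a * (star x ⬝ᵥ x).re ≤ (star x ⬝ᵥ (A *ᵥ x)).re := by
    rintro x hx
    obtain ⟨y, hyP, rfl⟩ := Submodule.mem_map.1 hx
    have h1 : star (e y) ⬝ᵥ (A *ᵥ e y) = star y ⬝ᵥ (B *ᵥ y) := by
      rw [hedot]
      simp only [dotProduct, Pi.star_apply, RCLike.star_def]
      exact Finset.sum_congr rfl fun j _ => by rw [hemul]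
    have h2 : star (e y) ⬝ᵥ (e y) = star y ⬝ᵥ y := by
      rw [hedot]
      simp only [dotProduct, Pi.star_apply, RCLike.star_def]
      exact Finset.sum_congr rfl fun j _ => by rw [heapp]
    have hBHD : B = H + DB := by rw [hH]; abel
    have hsplit : star y ⬝ᵥ (B *ᵥ y) = star y ⬝ᵥ (H *ᵥ y) + star y ⬝ᵥ (DB *ᵥ y) := by
      rw [hBHD, Matrix.add_mulVec, dotProduct_add]
    have hDBquad : (star y ⬝ᵥ (DB *ᵥ y)).re = ∑ j, d (ι j) * Complex.normSq (y j) := by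
      simp only [hDB, dotProduct, Matrix.mulVec_diagonal, Pi.star_apply, Complex.re_sum,
        RCLike.star_def]
      refine Finset.sum_congr rfl fun j _ => ?_
      have h4 : (starRingEnd ℂ) (y j) * (((d (ι j) : ℝ) : ℂ) * y j)
          = ((d (ι j) : ℝ) : ℂ) * (y j * (starRingEnd ℂ) (y j)) := by ring
      rw [h4, Complex.mul_conj, ← Complex.ofReal_mul, Complex.ofReal_re]
    have hHpos : 0 ≤ (star y ⬝ᵥ (H *ᵥ y)).re := hPq y hyP
    have hnormy : (star y ⬝ᵥ y).re = ∑ j, Complex.normSq (y j) := Helper.re_self_dot y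
    have hcompare : a * (star y ⬝ᵥ y).re ≤ ∑ j, d (ι j) * Complex.normSq (y j) := by
      rw [hnormy, Finset.mul_sum]
      exact Finset.sum_le_sum fun j _ =>
        mul_le_mul_of_nonneg_right (hdiag j) (Complex.normSq_nonneg _)
    have h3 : (star (e y) ⬝ᵥ (A *ᵥ e y)).re
        = (star y ⬝ᵥ (H *ᵥ y)).re + (star y ⬝ᵥ (DB *ᵥ y)).re := by
      rw [h1, hsplit, Complex.add_re]
    rw [h3, h2, hDBquad]
    linarith
  have := Helper.courant hA hk1 (by omega : k ≤ n) V hVdim a hquadV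
  exact this
end

section
/- Let S be the 5×5 cyclic shift matrix (S_{j,j+1 mod 5} = 1, other entries 0) and B = S² + S³. Then B is symmetric with nonnegative entries and zero diagonal, and its eigenvalues are 2 (simple), 2cos(2π/5) (multiplicity 2), and 2cos(4π/5) (multiplicity 2). In particular the third-smallest eigenvalue λ₃ = 2cos(2π/5) > 0 = a₅, so the inequality λ₃ ≤ a₅ fails for this nonnegative symmetric matrix. -/
open Matrix Complex Finset

open Polynomial in
set_option maxHeartbeats 1600000 in
theorem stmt12 (B : Matrix (Fin 5) (Fin 5) ℂ)
    (hBdef : B = (Matrix.of fun i j : Fin 5 => if j = i + 1 then (1 : ℂ) else 0) ^ 2 +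
                 (Matrix.of fun i j : Fin 5 => if j = i + 1 then (1 : ℂ) else 0) ^ 3)
    (hB : B.IsHermitian) :
    (∀ i j, ∃ t : ℝ, 0 ≤ t ∧ B i j = (t : ℂ)) ∧
    (∀ i, B i i = 0) ∧
    sortedEigs hB 0 = 2 * Real.cos (4 * Real.pi / 5) ∧
    sortedEigs hB 1 = 2 * Real.cos (4 * Real.pi / 5) ∧
    sortedEigs hB 2 = 2 * Real.cos (2 * Real.pi / 5) ∧
    sortedEigs hB 3 = 2 * Real.cos (2 * Real.pi / 5) ∧
    sortedEigs hB 4 = 2 ∧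
    sortedDiag B 4 < sortedEigs hB 2 := by
  -- explicit form of B
  have hBval : B = Matrix.of fun i j : Fin 5 => if j = i + 2 ∨ j = i + 3 then (1:ℂ) else 0 := by
    subst hBdef
    ext i j
    fin_cases i <;> fin_cases j <;>
      simp [pow_succ, Matrix.mul_apply, Fin.sum_univ_five, Matrix.add_apply]
  -- cosine values
  set s : ℝ := Real.sqrt 5 with hsdef
  have hs2 : s ^ 2 = 5 := Real.sq_sqrt (by norm_num)
  have hs0 : 0 ≤ s := Real.sqrt_nonneg 5
  have hc1 : Real.cos (Real.pi / 5) = (1 + s) / 4 := Real.cos_pi_div_five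
  have hc2 : Real.cos (2 * Real.pi / 5) = (s - 1) / 4 := by
    have h := Real.cos_two_mul (Real.pi / 5)
    rw [show 2 * (Real.pi / 5) = 2 * Real.pi / 5 by ring] at h
    rw [h, hc1]
    nlinarith [hs2]
  have hc3 : Real.cos (4 * Real.pi / 5) = -(1 + s) / 4 := by
    rw [show 4 * Real.pi / 5 = Real.pi - Real.pi / 5 by ring, Real.cos_pi_sub, hc1]
    ring
  set aR : ℝ := 2 * Real.cos (2 * Real.pi / 5) with haR
  set bR : ℝ := 2 * Real.cos (4 * Real.pi / 5) with hbR
  have hav : aR = (s - 1) / 2 := by rw [haR, hc2]; ring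
  have hbv : bR = -(1 + s) / 2 := by rw [hbR, hc3]; ring
  have hba : bR ≤ aR := by rw [hav, hbv]; nlinarith
  have ha2 : aR ≤ 2 := by rw [hav]; nlinarith
  have hb2 : bR ≤ 2 := le_trans hba ha2
  have hapos : 0 < aR := by rw [hav]; nlinarith
  -- determinant formula via spectral theorem
  have hdetspec : ∀ x : ℂ, det (x • (1 : Matrix (Fin 5) (Fin 5) ℂ) - B)
      = ∏ i, (x - (hB.eigenvalues i : ℂ)) := by
    intro x
    set U := (hB.eigenvectorUnitary : Matrix (Fin 5) (Fin 5) ℂ) with hU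
    have hUU : star U * U = 1 := Unitary.coe_star_mul_self _
    have key : star U * (x • (1 : Matrix (Fin 5) (Fin 5) ℂ) - B) * U
        = x • (1 : Matrix (Fin 5) (Fin 5) ℂ) - diagonal (RCLike.ofReal ∘ hB.eigenvalues) := by
      rw [mul_sub, sub_mul, (by simpa [Unitary.conjStarAlgAut_star_apply, U] using hB.conjStarAlgAut_star_eigenvectorUnitary : star U * B * U = diagonal (RCLike.ofReal ∘ hB.eigenvalues))]
      congr 1
      rw [Matrix.mul_smul, mul_one, Matrix.smul_mul, hUU]
    have hdet : det (star U) * det U = 1 := by rw [← det_mul, hUU, det_one]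
    calc det (x • (1 : Matrix (Fin 5) (Fin 5) ℂ) - B)
        = det (star U) * det (x • (1 : Matrix (Fin 5) (Fin 5) ℂ) - B) * det U := by
          linear_combination (-(det (x • (1 : Matrix (Fin 5) (Fin 5) ℂ) - B))) * hdet
      _ = det (star U * (x • (1 : Matrix (Fin 5) (Fin 5) ℂ) - B) * U) := by
          rw [det_mul, det_mul]
      _ = det (x • (1 : Matrix (Fin 5) (Fin 5) ℂ) - diagonal (RCLike.ofReal ∘ hB.eigenvalues)) := by
          rw [key]
      _ = ∏ i, (x - (hB.eigenvalues i : ℂ)) := by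
          rw [smul_eq_diagonal_mul, mul_one, diagonal_sub, det_diagonal]
          simp
  -- explicit determinant
  have hdetexp : ∀ x : ℂ, det (x • (1 : Matrix (Fin 5) (Fin 5) ℂ) - B)
      = x^5 - 5*x^3 + 5*x - 2 := by
    intro x
    have hM : (x • (1 : Matrix (Fin 5) (Fin 5) ℂ) - B)
        = !![x,0,-1,-1,0; 0,x,0,-1,-1; -1,0,x,0,-1; -1,-1,0,x,0; 0,-1,-1,0,x] := by
      rw [hBval]
      ext i j
      fin_cases i <;> fin_cases j <;>
        simp [Matrix.one_apply, Matrix.cons_val_zero, Matrix.cons_val_one, Matrix.vecHead,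
          Matrix.vecTail]
    rw [hM]
    simp [Matrix.det_succ_row_zero, Fin.sum_univ_succ,
      Matrix.submatrix_apply, Fin.succAbove, Matrix.cons_val_zero,
      Matrix.cons_val_one, Matrix.vecHead, Matrix.vecTail]
    ring
  -- product of linear factors
  have hfac : ∀ x : ℂ, (x - 2) * (x - (aR:ℂ)) ^ 2 * (x - (bR:ℂ)) ^ 2
      = x^5 - 5*x^3 + 5*x - 2 := by
    intro x
    have hsum : (aR:ℂ) + (bR:ℂ) = -1 := by
      rw [hav, hbv]; push_cast; ring
    have hmul : (aR:ℂ) * (bR:ℂ) = -1 := by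
      have : aR * bR = -1 := by rw [hav, hbv]; nlinarith
      rw [← Complex.ofReal_mul, this]; norm_num
    have h2 : (x - (aR:ℂ)) * (x - (bR:ℂ)) = x^2 + x - 1 := by
      linear_combination (-x) * hsum + hmul
    calc (x - 2) * (x - (aR:ℂ)) ^ 2 * (x - (bR:ℂ)) ^ 2
        = (x - 2) * ((x - (aR:ℂ)) * (x - (bR:ℂ))) ^ 2 := by ring
      _ = (x - 2) * (x^2 + x - 1)^2 := by rw [h2]
      _ = x^5 - 5*x^3 + 5*x - 2 := by ring
  -- polynomial identity & roots
  have hmult : Finset.univ.val.map hB.eigenvalues = ↑[(2:ℝ), aR, aR, bR, bR] := by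
    have hp : (Multiset.map (fun r => (X:ℂ[X]) - C r)
          (Multiset.map (fun i => (hB.eigenvalues i : ℂ)) Finset.univ.val)).prod
        = (Multiset.map (fun r => (X:ℂ[X]) - C r)
          (Multiset.map (fun r : ℝ => (r:ℂ)) ↑[(2:ℝ), aR, aR, bR, bR])).prod := by
      apply Polynomial.funext
      intro x
      rw [Polynomial.eval_multiset_prod, Polynomial.eval_multiset_prod]
      simp only [Multiset.map_map, Function.comp, Polynomial.eval_sub, Polynomial.eval_X,
        Polynomial.eval_C, Multiset.map_coe, Multiset.prod_coe, List.map_cons, List.map_nil,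
        List.prod_cons, List.prod_nil]
      have h1 : (Multiset.map (fun i => x - (hB.eigenvalues i : ℂ)) Finset.univ.val).prod
          = ∏ i, (x - (hB.eigenvalues i : ℂ)) := (Finset.prod_eq_multiset_prod _ _).symm
      rw [h1, ← hdetspec x, hdetexp x, ← hfac x]
      push_cast
      ring
    have hroots := congrArg Polynomial.roots hp
    rw [Polynomial.roots_multiset_prod_X_sub_C, Polynomial.roots_multiset_prod_X_sub_C] at hroots
    apply Multiset.map_injective Complex.ofReal_injective
    simpa [Multiset.map_map, Function.comp] using hroots
  -- sorting
  have hsorteq : hB.eigenvalues ∘ Tuple.sort hB.eigenvalues = ![bR, bR, aR, aR, 2] := by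
    apply List.ofFn_injective
    have hperm : List.Perm (List.ofFn (hB.eigenvalues ∘ Tuple.sort hB.eigenvalues))
        (List.ofFn ![bR, bR, aR, aR, (2:ℝ)]) := by
      refine ((Tuple.sort hB.eigenvalues).ofFn_comp_perm hB.eigenvalues).trans ?_
      have hofn : List.ofFn ![bR, bR, aR, aR, (2:ℝ)] = [bR, bR, aR, aR, 2] := by
        simp [List.ofFn_succ]
      rw [← Multiset.coe_eq_coe, ← Fin.univ_val_map, ← Fin.univ_val_map, hmult,
        Fin.univ_val_map, hofn]
      exact Multiset.coe_eq_coe.mpr (List.reverse_perm [bR, bR, aR, aR, 2])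
    refine List.Perm.eq_of_pairwise' ((Tuple.monotone_sort hB.eigenvalues).sortedLE_ofFn.pairwise) ?_ hperm
    have hofn : List.ofFn ![bR, bR, aR, aR, (2:ℝ)] = [bR, bR, aR, aR, 2] := by
      simp [List.ofFn_succ]
    rw [hofn]
    simp only [List.pairwise_cons, List.mem_cons, List.not_mem_nil, List.mem_singleton,
      List.Pairwise.nil, and_true, forall_eq_or_imp, forall_eq, or_false]
    exact ⟨⟨le_refl bR, hba, hba, hb2⟩, ⟨hba, hba, hb2⟩, ⟨le_refl aR, ha2⟩, ha2, fun b h => h.elim⟩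
  have hs0' : sortedEigs hB = ![bR, bR, aR, aR, 2] := hsorteq
  -- diagonal
  have hdiag : ∀ i, B i i = 0 := by
    intro i
    rw [hBval]
    fin_cases i <;> simp
  refine ⟨?_, hdiag, ?_, ?_, ?_, ?_, ?_, ?_⟩
  · intro i j
    rw [hBval]
    by_cases h : j = i + 2 ∨ j = i + 3
    · exact ⟨1, by norm_num, by simp [h]⟩
    · exact ⟨0, le_refl 0, by simp [h]⟩
  · rw [hs0']; rfl
  · rw [hs0']; rfl
  · rw [hs0']; rfl
  · rw [hs0']; rfl
  · rw [hs0']; rfl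
  · have : sortedDiag B 4 = 0 := by
      simp only [sortedDiag, Function.comp_apply, hdiag, Complex.zero_re]
    rw [this, hs0']
    exact hapos
end

section
/- Schur's majorization inequality: for any n×n Hermitian matrix A with eigenvalues λ₁ ≤ ⋯ ≤ λₙ and diagonal entries sorted increasingly as a₁ ≤ ⋯ ≤ aₙ, one has ∑_{j=1}^{k} λ_j ≤ ∑_{j=1}^{k} a_j for all 1 ≤ k ≤ n, with equality when k = n. -/
open Matrix Complex Finset

section aux
variable {n : ℕ} {A : Matrix (Fin n) (Fin n) ℂ} (hA : A.IsHermitian)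

noncomputable def schurW (i t : Fin n) : ℝ :=
  ‖(hA.eigenvectorUnitary : Matrix (Fin n) (Fin n) ℂ) i t‖ ^ 2

lemma schurW_nonneg (i t : Fin n) : 0 ≤ schurW hA i t := sq_nonneg _

lemma schur_diag_re (i : Fin n) :
    (A i i).re = ∑ t, hA.eigenvalues t * schurW hA i t := by
  conv_lhs => rw [hA.spectral_theorem]
  simp only [schurW, Matrix.IsHermitian.eigenvectorUnitary_apply]
  simp [Matrix.mul_apply, Matrix.diagonal_apply, Finset.sum_mul]
  refine Finset.sum_congr rfl fun x _ => ?_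
  rw [Complex.sq_norm, Complex.normSq_apply]; ring

lemma schurW_row_sum (i : Fin n) : ∑ t, schurW hA i t = 1 := by
  have h := (Matrix.mem_unitaryGroup_iff).mp hA.eigenvectorUnitary.2
  have h2 := congrArg (fun M => M i i) h
  simp [Matrix.mul_apply, Matrix.one_apply] at h2
  have h3 : ((∑ x, Complex.normSq (hA.eigenvectorBasis x i) : ℝ) : ℂ) = 1 := by
    push_cast
    simpa [Complex.mul_conj] using h2
  have h4 := Complex.ofReal_eq_one.mp h3
  simp only [schurW, Matrix.IsHermitian.eigenvectorUnitary_apply,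
    Complex.sq_norm]
  exact h4

lemma schurW_col_sum (t : Fin n) : ∑ i, schurW hA i t = 1 := by
  have h := (Matrix.mem_unitaryGroup_iff').mp hA.eigenvectorUnitary.2
  have h2 := congrArg (fun M => M t t) h
  simp [Matrix.mul_apply, Matrix.one_apply] at h2
  have h3 : ((∑ x, Complex.normSq (hA.eigenvectorBasis t x) : ℝ) : ℂ) = 1 := by
    push_cast
    simpa [mul_comm, Complex.mul_conj] using h2
  have h4 := Complex.ofReal_eq_one.mp h3
  simp only [schurW, Matrix.IsHermitian.eigenvectorUnitary_apply,
    Complex.sq_norm]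
  exact h4

lemma schur_cardF {k : ℕ} (hk2 : k ≤ n) :
    (Finset.univ.filter (fun j : Fin n => (j : ℕ) < k)).card = k := by
  have he : (Finset.univ.filter (fun j : Fin n => (j : ℕ) < k))
      = Finset.map (Fin.castLEEmb hk2) Finset.univ := by
    ext j
    simp only [Finset.mem_filter, Finset.mem_univ, true_and, Finset.mem_map,
      Fin.castLEEmb_apply]
    constructor
    · intro h; exact ⟨⟨j, h⟩, rfl⟩
    · rintro ⟨a, rfl⟩; exact a.isLt
  rw [he, Finset.card_map, Finset.card_univ, Fintype.card_fin]

lemma schur_key {k : ℕ} (hk1 : 1 ≤ k) (hk2 : k ≤ n) (S : Finset (Fin n)) (hS : S.card = k) :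
    ∑ j ∈ Finset.univ.filter (fun j : Fin n => (j : ℕ) < k), sortedEigs hA j ≤
      ∑ i ∈ S, (A i i).re := by
  classical
  set lam := hA.eigenvalues with hlam
  set τ := Tuple.sort lam with hτ
  set F := Finset.univ.filter (fun j : Fin n => (j : ℕ) < k) with hF
  set T := F.image τ with hT
  set c : Fin n → ℝ := fun t => ∑ i ∈ S, schurW hA i t with hc
  have hkn : k - 1 < n := by omega
  set μ := lam (τ ⟨k - 1, hkn⟩) with hμ
  have cardF : F.card = k := schur_cardF hk2
  have cardT : T.card = k := by
    rw [hT, Finset.card_image_of_injective _ τ.injective, cardF]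
  -- c bounds
  have hc_nonneg : ∀ t, 0 ≤ c t := fun t =>
    Finset.sum_nonneg fun i _ => schurW_nonneg hA i t
  have hc_le_one : ∀ t, c t ≤ 1 := by
    intro t
    calc c t ≤ ∑ i, schurW hA i t :=
          Finset.sum_le_sum_of_subset_of_nonneg (Finset.subset_univ S)
            (fun i _ _ => schurW_nonneg hA i t)
      _ = 1 := schurW_col_sum hA t
  have hc_sum : ∑ t, c t = k := by
    rw [hc]
    rw [Finset.sum_comm]
    simp only [schurW_row_sum hA]
    simp [hS]
  -- RHS rewrite
  have hrhs : ∑ i ∈ S, (A i i).re = ∑ t, lam t * c t := by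
    simp only [schur_diag_re hA]
    rw [Finset.sum_comm]
    simp [hc, Finset.mul_sum]
    rfl
  -- LHS rewrite
  have hlhs : ∑ j ∈ F, sortedEigs hA j = ∑ t ∈ T, lam t := by
    rw [hT, Finset.sum_image (fun x _ y _ h => τ.injective h)]
    rfl
  rw [hrhs, hlhs]
  -- monotonicity facts
  have mono : Monotone (lam ∘ τ) := Tuple.monotone_sort lam
  have hle : ∀ t ∈ T, lam t ≤ μ := by
    intro t ht
    obtain ⟨j, hj, rfl⟩ := Finset.mem_image.mp ht
    have hj' : (j : ℕ) < k := (Finset.mem_filter.mp hj).2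
    have : j ≤ (⟨k - 1, hkn⟩ : Fin n) := by
      rw [Fin.le_def]; simp; omega
    exact mono this
  have hge : ∀ t ∈ Tᶜ, μ ≤ lam t := by
    intro t ht
    have htj : τ (τ.symm t) = t := τ.apply_symm_apply t
    have : ¬ ((τ.symm t : ℕ) < k) := by
      intro h
      exact (Finset.mem_compl.mp ht)
        (Finset.mem_image.mpr ⟨τ.symm t, Finset.mem_filter.mpr ⟨Finset.mem_univ _, h⟩, htj⟩)
    have hle2 : (⟨k - 1, hkn⟩ : Fin n) ≤ τ.symm t := by
      rw [Fin.le_def]; simp; omega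
    have := mono hle2
    simpa [htj] using this
  -- the two sum bounds
  have hA1 : ∑ t ∈ T, μ * (c t - 1) ≤ ∑ t ∈ T, lam t * (c t - 1) := by
    refine Finset.sum_le_sum fun t ht => ?_
    exact mul_le_mul_of_nonpos_right (hle t ht) (by linarith [hc_le_one t])
  have hA2 : ∑ t ∈ Tᶜ, μ * c t ≤ ∑ t ∈ Tᶜ, lam t * c t := by
    refine Finset.sum_le_sum fun t ht => ?_
    exact mul_le_mul_of_nonneg_right (hge t ht) (hc_nonneg t)
  -- algebraic identities
  set X1 := ∑ t ∈ T, lam t * c t with hX1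
  set X2 := ∑ t ∈ Tᶜ, lam t * c t with hX2
  set C1 := ∑ t ∈ T, c t with hC1
  set C2 := ∑ t ∈ Tᶜ, c t with hC2
  set L := ∑ t ∈ T, lam t with hL
  have split : X1 + X2 = ∑ t, lam t * c t := Finset.sum_add_sum_compl T _
  have csplit : C1 + C2 = k := by
    rw [hC1, hC2, Finset.sum_add_sum_compl T c, hc_sum]
  have e1 : ∑ t ∈ T, lam t * (c t - 1) = X1 - L := by
    simp [mul_sub, Finset.sum_sub_distrib, hX1, hL]
  have e2 : ∑ t ∈ T, μ * (c t - 1) = μ * C1 - k * μ := by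
    rw [Finset.sum_congr rfl (fun t _ => mul_sub μ (c t) 1)]
    rw [Finset.sum_sub_distrib, ← Finset.mul_sum]
    simp only [Finset.sum_const, cardT, nsmul_eq_mul]
    ring
  have e3 : ∑ t ∈ Tᶜ, μ * c t = μ * C2 := by
    rw [← Finset.mul_sum]
  rw [e1] at hA1
  rw [e2] at hA1
  rw [e3] at hA2
  have : μ * C1 + μ * C2 = k * μ := by
    have : μ * (C1 + C2) = μ * k := by rw [csplit]
    linarith [this]
  linarith
end aux

theorem stmt14 (n : ℕ) (A : Matrix (Fin n) (Fin n) ℂ) (hA : A.IsHermitian) :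
    (∀ k : ℕ, 1 ≤ k → k ≤ n →
      ∑ j ∈ Finset.univ.filter (fun j : Fin n => (j : ℕ) < k), sortedEigs hA j ≤
      ∑ j ∈ Finset.univ.filter (fun j : Fin n => (j : ℕ) < k), sortedDiag A j) ∧
    ∑ j : Fin n, sortedEigs hA j = ∑ j : Fin n, sortedDiag A j := by
  classical
  constructor
  · intro k hk1 hk2
    set σ := Tuple.sort (fun i : Fin n => (A i i).re) with hσ
    set F := Finset.univ.filter (fun j : Fin n => (j : ℕ) < k) with hF
    set S := F.image σ with hSdef
    have hS : S.card = k := by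
      rw [hSdef, Finset.card_image_of_injective _ σ.injective, schur_cardF hk2]
    have h1 := schur_key hA hk1 hk2 S hS
    have h2 : ∑ i ∈ S, (A i i).re = ∑ j ∈ F, sortedDiag A j := by
      rw [hSdef, Finset.sum_image (fun x _ y _ h => σ.injective h)]
      rfl
    rw [h2] at h1
    exact h1
  · have e1 : ∑ j : Fin n, sortedEigs hA j = ∑ t, hA.eigenvalues t := by
      exact Equiv.sum_comp (Tuple.sort hA.eigenvalues) hA.eigenvalues
    have e2 : ∑ j : Fin n, sortedDiag A j = ∑ i, (A i i).re := by
      exact Equiv.sum_comp (Tuple.sort fun i => (A i i).re) (fun i => (A i i).re)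
    have e3 : ∑ i, (A i i).re = ∑ t, hA.eigenvalues t := by
      simp only [schur_diag_re hA]
      rw [Finset.sum_comm]
      simp only [← Finset.mul_sum, schurW_col_sum hA, mul_one]
    rw [e1, e2, e3]
end

section
/- Weyl's inequality: if A and B are n×n Hermitian matrices, then for all 1 ≤ j ≤ n, λ_j(A+B) ≤ λ_j(A) + λ_n(B), where eigenvalues are listed in increasing order. -/
open Matrix Complex Finset Module

namespace WeylAux

variable {n : ℕ}

noncomputable def quadForm (M : Matrix (Fin n) (Fin n) ℂ) (x : EuclideanSpace ℂ (Fin n)) : ℝ :=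
  (inner ℂ x (Matrix.toEuclideanLin M x) : ℂ).re

lemma toEuclideanLin_basis {M : Matrix (Fin n) (Fin n) ℂ} (hM : M.IsHermitian) (i : Fin n) :
    Matrix.toEuclideanLin M (hM.eigenvectorBasis i)
      = (hM.eigenvalues i : ℂ) • hM.eigenvectorBasis i := by
  ext k
  simpa [Matrix.toEuclideanLin_apply] using congrFun (hM.mulVec_eigenvectorBasis i) k

lemma repr_toEuclideanLin {M : Matrix (Fin n) (Fin n) ℂ} (hM : M.IsHermitian)
    (x : EuclideanSpace ℂ (Fin n)) (i : Fin n) :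
    hM.eigenvectorBasis.repr (Matrix.toEuclideanLin M x) i
      = hM.eigenvalues i * hM.eigenvectorBasis.repr x i := by
  rw [OrthonormalBasis.repr_apply_apply, OrthonormalBasis.repr_apply_apply,
    ← (Matrix.isHermitian_iff_isSymmetric.mp hM) (hM.eigenvectorBasis i) x,
    toEuclideanLin_basis hM i, inner_smul_left]
  simp [Complex.conj_ofReal]

lemma quadForm_eq {M : Matrix (Fin n) (Fin n) ℂ} (hM : M.IsHermitian)
    (x : EuclideanSpace ℂ (Fin n)) :
    quadForm M x = ∑ i, hM.eigenvalues i * ‖hM.eigenvectorBasis.repr x i‖ ^ 2 := by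
  unfold quadForm
  rw [← hM.eigenvectorBasis.repr.inner_map_map x (Matrix.toEuclideanLin M x),
    PiLp.inner_apply]
  rw [Complex.re_sum]
  refine Finset.sum_congr rfl fun i _ => ?_
  rw [repr_toEuclideanLin hM x i, RCLike.inner_apply]
  set c := hM.eigenvectorBasis.repr x i
  have : (hM.eigenvalues i : ℂ) * c * (starRingEnd ℂ) c
      = ((hM.eigenvalues i * ‖c‖ ^ 2 : ℝ) : ℂ) := by
    push_cast
    rw [← Complex.mul_conj']
    ring
  rw [this, Complex.ofReal_re]

lemma norm_sq_eq {M : Matrix (Fin n) (Fin n) ℂ} (hM : M.IsHermitian)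
    (x : EuclideanSpace ℂ (Fin n)) :
    ‖x‖ ^ 2 = ∑ i, ‖hM.eigenvectorBasis.repr x i‖ ^ 2 := by
  rw [← hM.eigenvectorBasis.repr.norm_map x, EuclideanSpace.norm_eq,
    Real.sq_sqrt (by positivity)]

lemma quadForm_le {M : Matrix (Fin n) (Fin n) ℂ} (hM : M.IsHermitian) {t : ℝ}
    (x : EuclideanSpace ℂ (Fin n))
    (h : ∀ i, hM.eigenvectorBasis.repr x i ≠ 0 → hM.eigenvalues i ≤ t) :
    quadForm M x ≤ t * ‖x‖ ^ 2 := by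
  rw [quadForm_eq hM, norm_sq_eq hM x, Finset.mul_sum]
  refine Finset.sum_le_sum fun i _ => ?_
  by_cases hc : hM.eigenvectorBasis.repr x i = 0
  · simp [hc]
  · exact mul_le_mul_of_nonneg_right (h i hc) (by positivity)

lemma le_quadForm {M : Matrix (Fin n) (Fin n) ℂ} (hM : M.IsHermitian) {t : ℝ}
    (x : EuclideanSpace ℂ (Fin n))
    (h : ∀ i, hM.eigenvectorBasis.repr x i ≠ 0 → t ≤ hM.eigenvalues i) :
    t * ‖x‖ ^ 2 ≤ quadForm M x := by
  rw [quadForm_eq hM, norm_sq_eq hM x, Finset.mul_sum]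
  refine Finset.sum_le_sum fun i _ => ?_
  by_cases hc : hM.eigenvectorBasis.repr x i = 0
  · simp [hc]
  · exact mul_le_mul_of_nonneg_right (h i hc) (by positivity)

lemma repr_eq_zero_of_mem_span (b : OrthonormalBasis (Fin n) ℂ (EuclideanSpace ℂ (Fin n)))
    (s : Set (Fin n)) {x : EuclideanSpace ℂ (Fin n)}
    (hx : x ∈ Submodule.span ℂ (b '' s)) {i : Fin n} (hi : i ∉ s) :
    b.repr x i = 0 := by
  induction hx using Submodule.span_induction with
  | mem y hy =>
    obtain ⟨k, hk, rfl⟩ := hy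
    rw [OrthonormalBasis.repr_apply_apply]
    exact b.orthonormal.2 (fun h => hi (h ▸ hk))
  | zero => simp
  | add y z _ _ hy hz => simp [map_add, hy, hz]
  | smul c y _ hy => simp [_root_.map_smul, hy]

lemma finrank_span_image (b : OrthonormalBasis (Fin n) ℂ (EuclideanSpace ℂ (Fin n)))
    (s : Finset (Fin n)) :
    finrank ℂ (Submodule.span ℂ (b '' ↑s)) = s.card := by
  classical
  have hinj : Function.Injective b := b.toBasis.injective
  have : (b '' ↑s) = ↑(s.image b) := by simp [Finset.coe_image]
  have hli : LinearIndependent ℂ ((↑) : ↥(↑(s.image b) : Set (EuclideanSpace ℂ (Fin n))) → EuclideanSpace ℂ (Fin n)) := by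
    refine (show LinearIndepOn ℂ id (↑(s.image b) : Set (EuclideanSpace ℂ (Fin n))) from (show LinearIndepOn ℂ id (Set.range b) from b.orthonormal.linearIndependent.linearIndepOn_id).mono ?_)
    rw [Finset.coe_image]
    exact Set.image_subset_range b ↑s
  rw [this, finrank_span_finset_eq_card hli, Finset.card_image_of_injective _ hinj]

lemma exists_nonzero_inter (S T : Submodule ℂ (EuclideanSpace ℂ (Fin n)))
    (h : n < finrank ℂ S + finrank ℂ T) : ∃ x, x ∈ S ⊓ T ∧ x ≠ 0 := by
  have h1 := Submodule.finrank_sup_add_finrank_inf_eq S T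
  have h2 : finrank ℂ ↥(S ⊔ T) ≤ n := by
    have := Submodule.finrank_le (S ⊔ T)
    rwa [finrank_euclideanSpace, Fintype.card_fin] at this
  have hp : 0 < finrank ℂ ↥(S ⊓ T) := by omega
  obtain ⟨x, hx⟩ := Module.finrank_pos_iff_exists_ne_zero.mp hp
  exact ⟨x.1, x.2, fun h0 => hx (Subtype.ext h0)⟩

lemma quadForm_add (A B : Matrix (Fin n) (Fin n) ℂ) (x : EuclideanSpace ℂ (Fin n)) :
    quadForm (A + B) x = quadForm A x + quadForm B x := by
  unfold quadForm
  rw [map_add, LinearMap.add_apply, inner_add_right, Complex.add_re]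

end WeylAux

open Matrix Complex Finset

theorem stmt16 (n : ℕ) (A B : Matrix (Fin n) (Fin n) ℂ)
    (hA : A.IsHermitian) (hB : B.IsHermitian) (j : Fin n) :
    sortedEigs (hA.add hB) j ≤
      sortedEigs hA j + sortedEigs hB ⟨n - 1, by have := j.isLt; omega⟩ := by
  classical
  have hC : (A + B).IsHermitian := hA.add hB
  set σA := Tuple.sort hA.eigenvalues with hσA
  set σC := Tuple.sort (hA.add hB).eigenvalues with hσC
  set bA := hA.eigenvectorBasis with hbA
  set bC := (hA.add hB).eigenvectorBasis with hbC
  set sA : Finset (Fin n) := (Finset.Iic j).image σA with hsA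
  set sC : Finset (Fin n) := (Finset.Ici j).image σC with hsC
  set S := Submodule.span ℂ (bA '' ↑sA) with hS
  set T := Submodule.span ℂ (bC '' ↑sC) with hT
  have hdim : n < Module.finrank ℂ S + Module.finrank ℂ T := by
    rw [hS, hT, WeylAux.finrank_span_image, WeylAux.finrank_span_image, hsA, hsC,
      Finset.card_image_of_injective _ σA.injective,
      Finset.card_image_of_injective _ σC.injective,
      Fin.card_Iic, Fin.card_Ici]
    have := j.isLt
    omega
  obtain ⟨x, hxST, hx0⟩ := WeylAux.exists_nonzero_inter S T hdim
  have hnorm : (0:ℝ) < ‖x‖ ^ 2 := pow_pos (norm_pos_iff.mpr hx0) 2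
  have hA1 : WeylAux.quadForm A x ≤ sortedEigs hA j * ‖x‖ ^ 2 := by
    apply WeylAux.quadForm_le hA x
    intro i hi
    have hmem : i ∈ sA := by
      by_contra hc
      exact hi (WeylAux.repr_eq_zero_of_mem_span bA ↑sA hxST.1 (by simpa using hc))
    obtain ⟨k, hk, rfl⟩ := Finset.mem_image.mp hmem
    exact Tuple.monotone_sort hA.eigenvalues (Finset.mem_Iic.mp hk)
  have hB1 : WeylAux.quadForm B x ≤
      sortedEigs hB ⟨n - 1, by have := j.isLt; omega⟩ * ‖x‖ ^ 2 := by
    apply WeylAux.quadForm_le hB x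
    intro i _
    have : hB.eigenvalues i = sortedEigs hB ((Tuple.sort hB.eigenvalues).symm i) := by
      simp [sortedEigs]
    rw [this]
    apply Tuple.monotone_sort hB.eigenvalues
    rw [Fin.le_def]
    have := ((Tuple.sort hB.eigenvalues).symm i).isLt
    simp only []
    omega
  have hC1 : sortedEigs (hA.add hB) j * ‖x‖ ^ 2 ≤ WeylAux.quadForm (A + B) x := by
    apply WeylAux.le_quadForm (hA.add hB) x
    intro i hi
    have hmem : i ∈ sC := by
      by_contra hc
      exact hi (WeylAux.repr_eq_zero_of_mem_span bC ↑sC hxST.2 (by simpa using hc))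
    obtain ⟨k, hk, rfl⟩ := Finset.mem_image.mp hmem
    exact Tuple.monotone_sort (hA.add hB).eigenvalues (Finset.mem_Ici.mp hk)
  have hsum := WeylAux.quadForm_add A B x
  have final : sortedEigs (hA.add hB) j * ‖x‖ ^ 2 ≤
      (sortedEigs hA j + sortedEigs hB ⟨n - 1, by have := j.isLt; omega⟩) * ‖x‖ ^ 2 := by
    rw [add_mul]
    linarith
  exact le_of_mul_le_mul_right final hnorm
end
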